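/- arXiv:2402.11299 — 7 statements merged into one kernel-verified Lean document; each statement's English description precedes it below -/
import Mathlib

section
/- Let m, n, p, ℓ, λ, μ be natural numbers and let A be a real symmetric positive definite matrix indexed by Fin m ⊕ (Fin p × Fin n) (a B³-Arrowhead matrix) satisfying: (i) A (inl i) (inl i') = 0 whenever |i − i'| > λ + μ; (ii) A (inl i) (inr (k,j)) = 0 whenever k ≥ ℓ, or i − j > λ, or j − i > μ; (iii) A (inr (k,j)) (inl i) = A (inl i) (inr (k,j)) (symmetry); (iv) A (inr (k,j)) (inr (k',j')) = 0 whenever j ≠ j' or |k − k'| > ℓ. Then there exists a matrix L indexed by Fin m ⊕ (Fin p × Fin n) such that A = Lᵀ L, L is lower triangular with respect to the order in which the Fin m indices come first (in their natural order) followed by the pairs (k,j) ordered lexicographically, and L has the sparsity: L (inl i) (inl i') = 0 whenever i − i' > λ + μ or i < i'; L (inl i) (inr (k,j)) = 0 for all i,k,j; L (inr (k,j)) (inl i) = 0 whenever k ≥ ℓ, or j − i > μ, or i − j > λ; and L (inr (k,j)) (inr (k',j')) = 0 unless j = j' and 0 ≤ k − k' ≤ ℓ. -/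
/-!
Eliminate the pivots from the last one upwards. Writing `A = [[A', v], [vᵀ, d]]` with `d > 0`,
we get `A = Lᵀ L` for `L = [[L', 0], [vᵀ/√d, √d]]`, where `L'ᵀ L' = A' - v vᵀ/d` is the
factorisation of the Schur complement, which is again positive definite. An entry of `A` that
vanishes by the band conditions stays zero in `L` provided no fill-in occurs: whenever
`A r c = 0` is forced and the pivot `t` comes after `r` and `c`, one of `A t r`, `A t c` is forced
to vanish too, so the update `A t r A t c / A t t` is zero. The B³-Arrowhead pattern, with the
leading block first and the trailing blocks in lexicographic order, has this property.
-/

open Matrix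

/-- The flattening of the block index set `Fin m ⊕ (Fin p × Fin n)` into `ℕ`, where the
`Fin m` indices come first (in natural order) followed by the pairs `(k, j)` ordered
lexicographically (block index `k` first, then the row `j` within the block). -/
def arrowheadOrder {m p n : ℕ} : Fin m ⊕ (Fin p × Fin n) → ℕ
  | .inl i => (i : ℕ)
  | .inr (k, j) => m + (k : ℕ) * n + (j : ℕ)

namespace Matrix

variable {N : ℕ}

noncomputable def schurLast (A : Matrix (Fin (N + 1)) (Fin (N + 1)) ℝ) : Matrix (Fin N) (Fin N) ℝ :=
  of fun r c => A r.castSucc c.castSucc -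
    A (Fin.last N) r.castSucc * A (Fin.last N) c.castSucc / A (Fin.last N) (Fin.last N)

/-- The elimination matrix `[I; -wᵀ]` with `w c = A last c / A last last`. -/
noncomputable def schurLastEliminator (A : Matrix (Fin (N + 1)) (Fin (N + 1)) ℝ) :
    Matrix (Fin (N + 1)) (Fin N) ℝ :=
  of fun r c => Fin.lastCases (-(A (Fin.last N) c.castSucc / A (Fin.last N) (Fin.last N)))
    (fun r' => (1 : Matrix (Fin N) (Fin N) ℝ) r' c) r

lemma schurLast_eq_conjTranspose_mul_mul {A : Matrix (Fin (N + 1)) (Fin (N + 1)) ℝ}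
    (hA : A.IsHermitian) (hd : A (Fin.last N) (Fin.last N) ≠ 0) :
    schurLast A = (schurLastEliminator A)ᴴ * A * schurLastEliminator A := by
  ext r c
  have hs : ∀ i j, A i j = A j i := fun i j => by simpa using hA.apply j i
  simp only [schurLast, of_apply, schurLastEliminator, one_apply,
    conjTranspose_eq_transpose_of_trivial, mul_apply, transpose_apply, Fin.sum_univ_castSucc,
    Fin.lastCases_castSucc, ite_mul, one_mul, zero_mul, Finset.sum_ite_eq', Finset.mem_univ,
    ↓reduceIte, Fin.lastCases_last, neg_mul, mul_ite, mul_one, mul_zero, hs _ (Fin.last N), mul_neg]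
  field_simp
  ring

lemma PosDef.schurLast {A : Matrix (Fin (N + 1)) (Fin (N + 1)) ℝ} (hA : A.PosDef) :
    A.schurLast.PosDef := by
  rw [schurLast_eq_conjTranspose_mul_mul hA.isHermitian hA.diag_pos.ne']
  refine hA.conjTranspose_mul_mul_same fun x y hxy => funext fun i => ?_
  simpa [schurLastEliminator, mulVec, dotProduct, one_apply] using congrFun hxy i.castSucc

/-- Cholesky factorisation `A = Lᵀ L` computed from the last pivot upwards, so that `L` is lower
triangular. -/
noncomputable def reverseCholesky : {N : ℕ} → Matrix (Fin N) (Fin N) ℝ → Matrix (Fin N) (Fin N) ℝ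
  | 0, _ => 0
  | N + 1, A => of <| Fin.lastCases
      (Fin.lastCases (√(A (Fin.last N) (Fin.last N)))
        fun c => A (Fin.last N) c.castSucc / √(A (Fin.last N) (Fin.last N)))
      fun r => Fin.lastCases 0 (reverseCholesky (schurLast A) r)

@[simp] lemma reverseCholesky_last_last (A : Matrix (Fin (N + 1)) (Fin (N + 1)) ℝ) :
    reverseCholesky A (Fin.last N) (Fin.last N) = √(A (Fin.last N) (Fin.last N)) := by
  simp [reverseCholesky]

@[simp] lemma reverseCholesky_last_castSucc (A : Matrix (Fin (N + 1)) (Fin (N + 1)) ℝ) (c : Fin N) :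
    reverseCholesky A (Fin.last N) c.castSucc =
      A (Fin.last N) c.castSucc / √(A (Fin.last N) (Fin.last N)) := by
  simp [reverseCholesky]

@[simp] lemma reverseCholesky_castSucc_last (A : Matrix (Fin (N + 1)) (Fin (N + 1)) ℝ) (r : Fin N) :
    reverseCholesky A r.castSucc (Fin.last N) = 0 := by
  simp [reverseCholesky]

@[simp] lemma reverseCholesky_castSucc_castSucc (A : Matrix (Fin (N + 1)) (Fin (N + 1)) ℝ)
    (r c : Fin N) :
    reverseCholesky A r.castSucc c.castSucc = reverseCholesky (schurLast A) r c := by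
  simp [reverseCholesky]

lemma reverseCholesky_eq_zero_of_lt {A : Matrix (Fin N) (Fin N) ℝ} {r c : Fin N} (h : r < c) :
    reverseCholesky A r c = 0 := by
  induction N with
  | zero => exact r.elim0
  | succ N ih =>
    induction r using Fin.lastCases with
    | last => exact absurd h (Fin.le_last c).not_gt
    | cast r =>
      induction c using Fin.lastCases with
      | last => simp
      | cast c => simpa using ih (Fin.castSucc_lt_castSucc_iff.mp h)

lemma transpose_reverseCholesky_mul_self {A : Matrix (Fin N) (Fin N) ℝ} (hA : A.PosDef) :
    (reverseCholesky A)ᵀ * reverseCholesky A = A := by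
  induction N with
  | zero => exact Subsingleton.elim _ _
  | succ N ih =>
    have hd : 0 < A (Fin.last N) (Fin.last N) := hA.diag_pos
    have hsqrt : √(A (Fin.last N) (Fin.last N)) ≠ 0 := (Real.sqrt_pos.mpr hd).ne'
    have hs : ∀ i j, A i j = A j i := fun i j => by simpa using hA.isHermitian.apply j i
    have ih' := congrFun₂ (ih hA.schurLast)
    ext r c
    simp only [mul_apply, transpose_apply, Fin.sum_univ_castSucc] at ih' ⊢
    induction r using Fin.lastCases with
    | last =>
      induction c using Fin.lastCases with
      | last => simp [hd.le]
      | cast c => simp [mul_div_cancel₀ _ hsqrt]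
    | cast r =>
      induction c using Fin.lastCases with
      | last => simp [div_mul_cancel₀ _ hsqrt, hs _ (Fin.last N)]
      | cast c =>
        simp only [reverseCholesky_castSucc_castSucc, reverseCholesky_last_castSucc, ih',
          div_mul_div_comm, Real.mul_self_sqrt hd.le]
        simp only [schurLast, of_apply]
        ring

lemma reverseCholesky_eq_zero_of_pattern {A : Matrix (Fin N) (Fin N) ℝ} (Z : Fin N → Fin N → Prop)
    (hAZ : ∀ r c, Z r c → A r c = 0) (hZ : ∀ r c t, Z r c → r < t → c < t → Z t r ∨ Z t c)
    {r c : Fin N} (h : Z r c) : reverseCholesky A r c = 0 := by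
  induction N with
  | zero => exact r.elim0
  | succ N ih =>
    induction r using Fin.lastCases with
    | last =>
      induction c using Fin.lastCases with
      | last => simp [hAZ _ _ h]
      | cast c => simp [hAZ _ _ h]
    | cast r =>
      induction c using Fin.lastCases with
      | last => simp
      | cast c =>
        rw [reverseCholesky_castSucc_castSucc]
        refine ih (fun r c => Z r.castSucc c.castSucc) (fun r c hrc => ?_)
          (fun r c t hrc hrt hct => hZ _ _ _ hrc (by simpa) (by simpa)) h
        obtain h' | h' := hZ _ _ _ hrc (Fin.castSucc_lt_last r) (Fin.castSucc_lt_last c) <;>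
          simp [schurLast, hAZ _ _ hrc, hAZ _ _ h']

lemma PosDef.exists_eq_transpose_mul_self_of_pattern {ι : Type*} [Fintype ι] {N : ℕ}
    (e : ι ≃ Fin N) {A : Matrix ι ι ℝ} (hA : A.PosDef) (Z : ι → ι → Prop)
    (hAZ : ∀ r c, Z r c → A r c = 0) (hZ : ∀ r c t, Z r c → e r < e t → e c < e t → Z t r ∨ Z t c) :
    ∃ L : Matrix ι ι ℝ, A = Lᵀ * L ∧ (∀ r c, e r < e c → L r c = 0) ∧
      ∀ r c, Z r c → L r c = 0 := by
  set R := reverseCholesky (A.submatrix e.symm e.symm)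
  refine ⟨R.submatrix e e, ?_, fun r c h => reverseCholesky_eq_zero_of_lt h, fun r c h => ?_⟩
  · rw [transpose_submatrix, submatrix_mul_equiv,
      transpose_reverseCholesky_mul_self (hA.submatrix e.symm.injective)]
    simp
  · refine reverseCholesky_eq_zero_of_pattern (fun r c => Z (e.symm r) (e.symm c))
      (fun r c h => hAZ _ _ h) (fun r c t h hrt hct => hZ _ _ _ h (by simpa) (by simpa)) ?_
    simpa using h

end Matrix

section Arrowhead

variable {m p n : ℕ}

def arrowheadEquiv (m p n : ℕ) : Fin m ⊕ (Fin p × Fin n) ≃ Fin (m + p * n) :=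
  (Equiv.sumCongr (Equiv.refl (Fin m)) finProdFinEquiv).trans finSumFinEquiv

lemma arrowheadEquiv_val (x : Fin m ⊕ (Fin p × Fin n)) :
    (arrowheadEquiv m p n x : ℕ) = arrowheadOrder x := by
  rcases x with i | ⟨k, j⟩
  · simp [arrowheadEquiv, arrowheadOrder]
  · simp [arrowheadEquiv, arrowheadOrder, finProdFinEquiv_apply_val]
    ring

lemma arrowheadEquiv_lt_iff {x y : Fin m ⊕ (Fin p × Fin n)} :
    arrowheadEquiv m p n x < arrowheadEquiv m p n y ↔ arrowheadOrder x < arrowheadOrder y := by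
  rw [Fin.lt_def, arrowheadEquiv_val, arrowheadEquiv_val]

lemma arrowheadOrder_inr_lt_inr_iff {k k' : Fin p} {j : Fin n} :
    arrowheadOrder (m := m) (.inr (k, j)) < arrowheadOrder (m := m) (.inr (k', j)) ↔ k < k' := by
  simp only [arrowheadOrder, add_lt_add_iff_right, add_lt_add_iff_left,
    Nat.mul_lt_mul_right j.pos, Fin.val_fin_lt]

variable (m p n) in
def arrowheadZero (ℓ lam mu : ℕ) : Fin m ⊕ (Fin p × Fin n) → Fin m ⊕ (Fin p × Fin n) → Prop
  | .inl i, .inl i' => (i' : ℕ) + (lam + mu) < i ∨ (i : ℕ) + (lam + mu) < i'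
  | .inl i, .inr (k, j) => ℓ ≤ (k : ℕ) ∨ (j : ℕ) + lam < i ∨ (i : ℕ) + mu < j
  | .inr (k, j), .inl i => ℓ ≤ (k : ℕ) ∨ (i : ℕ) + mu < j ∨ (j : ℕ) + lam < i
  | .inr (k, j), .inr (k', j') => j ≠ j' ∨ (k' : ℕ) + ℓ < k ∨ (k : ℕ) + ℓ < k'

lemma arrowheadZero_of_lt {ℓ lam mu : ℕ} (x y t : Fin m ⊕ (Fin p × Fin n))
    (hxy : arrowheadZero m p n ℓ lam mu x y) (hx : arrowheadOrder x < arrowheadOrder t)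
    (hy : arrowheadOrder y < arrowheadOrder t) :
    arrowheadZero m p n ℓ lam mu t x ∨ arrowheadZero m p n ℓ lam mu t y := by
  rcases t with s | ⟨k₂, j₂⟩
  · rcases x with i | ⟨k, j⟩ <;> rcases y with i' | ⟨k', j'⟩ <;>
      simp only [arrowheadZero, arrowheadOrder] at * <;> omega
  rcases x with i | ⟨k, j⟩ <;> rcases y with i' | ⟨k', j'⟩
  · simp only [arrowheadZero] at *
    omega
  · obtain rfl | hj := eq_or_ne j₂ j'
    · rw [arrowheadOrder_inr_lt_inr_iff, Fin.lt_def] at hy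
      simp only [arrowheadZero] at *
      omega
    · exact Or.inr (Or.inl hj)
  · obtain rfl | hj := eq_or_ne j₂ j
    · rw [arrowheadOrder_inr_lt_inr_iff, Fin.lt_def] at hx
      simp only [arrowheadZero] at *
      omega
    · exact Or.inl (Or.inl hj)
  · obtain rfl | hj := eq_or_ne j₂ j
    · obtain rfl | hj' := eq_or_ne j₂ j'
      · rw [arrowheadOrder_inr_lt_inr_iff, Fin.lt_def] at hx hy
        simp only [arrowheadZero, ne_eq, not_true_eq_false, false_or] at *
        omega
      · exact Or.inr (Or.inl hj')
    · exact Or.inl (Or.inl hj)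

end Arrowhead

/-- A symmetric positive definite B³-Arrowhead matrix with block-bandwidths
`(ℓ, ℓ)` and sub-block bandwidths built from `(λ, μ)` admits a reverse Cholesky
factorisation `A = Lᵀ L` with `L` a lower triangular B³-Arrowhead matrix with the
prescribed sparsity. -/
theorem b3arrowhead_reverse_cholesky (m n p ℓ lam mu : ℕ)
    (A : Matrix (Fin m ⊕ (Fin p × Fin n)) (Fin m ⊕ (Fin p × Fin n)) ℝ)
    (hA : A.PosDef)
    (h1 : ∀ i i' : Fin m,
      ((i' : ℕ) + (lam + mu) < (i : ℕ) ∨ (i : ℕ) + (lam + mu) < (i' : ℕ)) →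
        A (.inl i) (.inl i') = 0)
    (h2 : ∀ (i : Fin m) (k : Fin p) (j : Fin n),
      (ℓ ≤ (k : ℕ) ∨ (j : ℕ) + lam < (i : ℕ) ∨ (i : ℕ) + mu < (j : ℕ)) →
        A (.inl i) (.inr (k, j)) = 0)
    (h3 : ∀ (i : Fin m) (k : Fin p) (j : Fin n),
      A (.inr (k, j)) (.inl i) = A (.inl i) (.inr (k, j)))
    (h4 : ∀ (k k' : Fin p) (j j' : Fin n),
      (j ≠ j' ∨ (k' : ℕ) + ℓ < (k : ℕ) ∨ (k : ℕ) + ℓ < (k' : ℕ)) →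
        A (.inr (k, j)) (.inr (k', j')) = 0) :
    ∃ L : Matrix (Fin m ⊕ (Fin p × Fin n)) (Fin m ⊕ (Fin p × Fin n)) ℝ,
      A = Lᵀ * L ∧
      -- L is lower triangular with respect to the described ordering
      (∀ r c : Fin m ⊕ (Fin p × Fin n), arrowheadOrder r < arrowheadOrder c → L r c = 0) ∧
      -- sparsity of the leading block
      (∀ i i' : Fin m, ((i' : ℕ) + (lam + mu) < (i : ℕ) ∨ (i : ℕ) < (i' : ℕ)) →
        L (.inl i) (.inl i') = 0) ∧
      -- the top-right blocks vanish
      (∀ (i : Fin m) (k : Fin p) (j : Fin n), L (.inl i) (.inr (k, j)) = 0) ∧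
      -- sparsity of the first-column blocks
      (∀ (i : Fin m) (k : Fin p) (j : Fin n),
        (ℓ ≤ (k : ℕ) ∨ (i : ℕ) + mu < (j : ℕ) ∨ (j : ℕ) + lam < (i : ℕ)) →
          L (.inr (k, j)) (.inl i) = 0) ∧
      -- the remaining blocks are diagonal and below the block diagonal within distance ℓ
      (∀ (k k' : Fin p) (j j' : Fin n),
        ¬(j = j' ∧ (k' : ℕ) ≤ (k : ℕ) ∧ (k : ℕ) ≤ (k' : ℕ) + ℓ) →
          L (.inr (k, j)) (.inr (k', j')) = 0) := by
  have hAZ : ∀ x y, arrowheadZero m p n ℓ lam mu x y → A x y = 0 := by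
    rintro (i | ⟨k, j⟩) (i' | ⟨k', j'⟩) h
    · exact h1 _ _ h
    · exact h2 _ _ _ h
    · rw [h3]
      exact h2 _ _ _ (by simp only [arrowheadZero] at h; omega)
    · exact h4 _ _ _ _ h
  obtain ⟨L, hfac, hlt, hzero⟩ := hA.exists_eq_transpose_mul_self_of_pattern
    (arrowheadEquiv m p n) _ hAZ fun x y t h hx hy =>
      arrowheadZero_of_lt x y t h (arrowheadEquiv_lt_iff.mp hx) (arrowheadEquiv_lt_iff.mp hy)
  have hlt' : ∀ r c, arrowheadOrder r < arrowheadOrder c → L r c = 0 := fun r c h =>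
    hlt r c (arrowheadEquiv_lt_iff.mpr h)
  refine ⟨L, hfac, hlt', fun i i' h => ?_, fun i k j => hlt' _ _ ?_,
    fun i k j h => hzero _ _ h, fun k k' j j' h => ?_⟩
  · exact h.elim (fun h => hzero _ _ (Or.inl h)) (hlt' (.inl i) (.inl i'))
  · simp only [arrowheadOrder]
    omega
  · obtain rfl | hj := eq_or_ne j j'
    · obtain hk | hk := lt_or_ge k k'
      · exact hlt' _ _ (arrowheadOrder_inr_lt_inr_iff.mpr hk)
      · exact hzero _ _ (Or.inr (Or.inl (by rw [Fin.le_def] at hk; omega)))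
    · exact hzero _ _ (Or.inl hj)
end

section
/- Let A be a real n×n symmetric positive definite matrix with A i j = 0 whenever |i − j| > b. Then there exists a unique lower triangular matrix L with strictly positive diagonal entries such that A = Lᵀ L (the reverse Cholesky factorisation), and this L satisfies L i j = 0 whenever i − j > b. -/
/-!
The reverse Cholesky factor of `A` comes from the LDL decomposition of `A⁻¹`: if `M` is lower
triangular and `M A⁻¹ Mᵀ = D` is diagonal and positive, then `A = Mᵀ D⁻¹ M`, and scaling the rows
of `M` by `sign (M i i) / √(D i i)` gives the factor. Uniqueness and bandedness both come from
`(Lᵀ L) i j = L i i * L i j + ∑_{k > i} L k i * L k j`, which determines row `i` of `L` from `A`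
and the rows below it. In particular, if `A i j = 0` and the rows below `i` already vanish in
column `j`, then `L i j = 0`; so zeros of `A` that persist down a column, such as those outside
a band, persist in `L`.
-/

open Matrix Finset

variable {ι R : Type*} [Fintype ι]

lemma Matrix.transpose_mul_self_apply_eq_add_sum_erase [DecidableEq ι]
    [NonUnitalNonAssocSemiring R] (L : Matrix ι ι R) (i j : ι) :
    (Lᵀ * L) i j = L i i * L i j + ∑ k ∈ univ.erase i, L k i * L k j := by
  rw [mul_apply, ← add_sum_erase _ _ (mem_univ i)]
  rfl

variable [LinearOrder ι]

def IsReverseCholeskyFactor [Semiring R] [Preorder R] (A L : Matrix ι ι R) : Prop :=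
  L.IsLowerTriangular ∧ (∀ i, 0 < L i i) ∧ A = Lᵀ * L

namespace IsReverseCholeskyFactor

variable [Ring R] [LinearOrder R] [IsStrictOrderedRing R] {A L : Matrix ι ι R}

theorem apply_eq_zero_of_pattern (hL : IsReverseCholeskyFactor A L) {P : ι → ι → Prop}
    (hP : ∀ i j k, P i j → i < k → P k j) (hA : ∀ i j, P i j → A i j = 0) :
    ∀ i j, P i j → L i j = 0 := by
  classical
  obtain ⟨hlower, hdiag, rfl⟩ := hL
  intro i
  induction i using WellFoundedGT.induction with
  | _ i ih =>
    intro j hij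
    have hrow : (Lᵀ * L) i j = L i i * L i j := by
      rw [transpose_mul_self_apply_eq_add_sum_erase, sum_eq_zero, add_zero]
      intro k hk
      rcases lt_or_gt_of_ne (ne_of_mem_erase hk) with hki | hik
      · rw [hlower hki, zero_mul]
      · rw [ih k hik j (hP i j k hij hik), mul_zero]
    exact (mul_eq_zero.mp (hrow ▸ hA i j hij)).resolve_left (hdiag i).ne'

theorem unique {L₁ L₂ : Matrix ι ι R} (h₁ : IsReverseCholeskyFactor A L₁)
    (h₂ : IsReverseCholeskyFactor A L₂) : L₁ = L₂ := by
  classical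
  obtain ⟨hlower₁, hdiag₁, hA₁⟩ := h₁
  obtain ⟨hlower₂, hdiag₂, hA₂⟩ := h₂
  suffices ∀ i j, L₁ i j = L₂ i j from Matrix.ext this
  intro i
  induction i using WellFoundedGT.induction with
  | _ i ih =>
    have hrest : ∀ j, ∑ k ∈ univ.erase i, L₁ k i * L₁ k j =
        ∑ k ∈ univ.erase i, L₂ k i * L₂ k j := by
      intro j
      refine sum_congr rfl fun k hk => ?_
      rcases lt_or_gt_of_ne (ne_of_mem_erase hk) with hki | hik
      · rw [hlower₁ hki, hlower₂ hki, zero_mul, zero_mul]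
      · rw [ih k hik i, ih k hik j]
    have hrow : ∀ j, L₁ i i * L₁ i j = L₂ i i * L₂ i j := by
      intro j
      have h := congrFun (congrFun (hA₁.symm.trans hA₂) i) j
      rw [transpose_mul_self_apply_eq_add_sum_erase, transpose_mul_self_apply_eq_add_sum_erase,
        hrest] at h
      exact add_right_cancel h
    have hdiag : L₁ i i = L₂ i i :=
      (mul_self_inj (hdiag₁ i).le (hdiag₂ i).le).mp (hrow i)
    intro j
    exact mul_left_cancel₀ (hdiag₁ i).ne' (hdiag ▸ hrow j)

end IsReverseCholeskyFactor

theorem exists_isReverseCholeskyFactor_of_eq_transpose_mul_diagonal_mul {A M : Matrix ι ι ℝ}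
    {d : ι → ℝ} (hM : M.IsLowerTriangular) (hMdiag : ∀ i, M i i ≠ 0) (hd : ∀ i, 0 < d i)
    (hA : A = Mᵀ * diagonal d * M) : ∃ L, IsReverseCholeskyFactor A L := by
  classical
  set s : ι → ℝ := fun i => SignType.sign (M i i) * √(d i)
  have hs : (fun i => s i * s i) = d := by
    ext i
    rw [mul_mul_mul_comm, ← SignType.coe_mul, ← sign_mul, sign_pos (mul_self_pos.mpr (hMdiag i)),
      SignType.coe_one, one_mul, Real.mul_self_sqrt (hd i).le]
  refine ⟨diagonal s * M, (blockTriangular_diagonal s).mul hM, fun i => ?_, ?_⟩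
  · rw [diagonal_mul, mul_right_comm, sign_mul_self]
    exact mul_pos (abs_pos.mpr (hMdiag i)) (Real.sqrt_pos.mpr (hd i))
  · rw [hA, transpose_mul, diagonal_transpose, Matrix.mul_assoc Mᵀ (diagonal s),
      ← Matrix.mul_assoc (diagonal s), diagonal_mul_diagonal, hs, Matrix.mul_assoc]

theorem exists_isReverseCholeskyFactor {A : Matrix ι ι ℝ} (hA : A.PosDef) :
    ∃ L, IsReverseCholeskyFactor A L := by
  classical
  let _ : LocallyFiniteOrderBot ι := LocallyFiniteOrderBot.ofIic ι (fun a => {x | x ≤ a}) (by simp)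
  have hS : A⁻¹.PosDef := hA.inv
  set M := LDL.lowerInv hS
  have hM : M.IsLowerTriangular := fun i j h => LDL.lowerInv_triangular hS h
  have hMdet : IsUnit M.det := isUnit_det_of_invertible M
  have hMdiag : ∀ i, M i i ≠ 0 := by
    have := hMdet.ne_zero
    rw [det_of_isLowerTriangular M hM, prod_ne_zero_iff] at this
    exact fun i => this i (mem_univ i)
  have hD : (LDL.diag hS).PosDef := by
    rw [LDL.diag_eq_lowerInv_conj]
    exact hS.mul_mul_conjTranspose_same (vecMul_injective_iff_isUnit.mpr (isUnit_of_invertible M))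
  have hd : ∀ i, 0 < LDL.diagEntries hS i := posDef_diagonal_iff.mp hD
  refine exists_isReverseCholeskyFactor_of_eq_transpose_mul_diagonal_mul
    (d := (LDL.diagEntries hS)⁻¹) hM hMdiag (fun i => inv_pos.mpr (hd i)) ?_
  have hDinv : diagonal (LDL.diagEntries hS)⁻¹ = Mᵀ⁻¹ * A * M⁻¹ := by
    have hleft : diagonal (LDL.diagEntries hS)⁻¹ * LDL.diag hS = 1 := by
      rw [LDL.diag, diagonal_mul_diagonal', ← diagonal_one]
      exact congrArg diagonal (funext fun i => inv_mul_cancel₀ (hd i).ne')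
    rw [← inv_eq_left_inv hleft, LDL.diag_eq_lowerInv_conj, Matrix.mul_inv_rev, Matrix.mul_inv_rev,
      nonsing_inv_nonsing_inv _ ((isUnit_iff_isUnit_det A).mp hA.isUnit),
      conjTranspose_eq_transpose_of_trivial, Matrix.mul_assoc]
  rw [hDinv, Matrix.mul_assoc, Matrix.mul_assoc, nonsing_inv_mul _ hMdet, Matrix.mul_one,
    mul_nonsing_inv_cancel_left (A := Mᵀ) _ (by rwa [det_transpose])]

/-- A symmetric positive definite banded matrix has a unique reverse
Cholesky factorisation `A = Lᵀ L` with `L` lower triangular with strictly positive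
diagonal, and this `L` inherits the lower bandwidth `b`. -/
theorem banded_reverse_cholesky (n b : ℕ) (A : Matrix (Fin n) (Fin n) ℝ)
    (hA : A.PosDef)
    (hband : ∀ i j : Fin n, ((j : ℕ) + b < (i : ℕ) ∨ (i : ℕ) + b < (j : ℕ)) → A i j = 0) :
    (∃! L : Matrix (Fin n) (Fin n) ℝ,
      (∀ i j : Fin n, i < j → L i j = 0) ∧ (∀ i : Fin n, 0 < L i i) ∧ A = Lᵀ * L) ∧
    (∀ L : Matrix (Fin n) (Fin n) ℝ,
      ((∀ i j : Fin n, i < j → L i j = 0) ∧ (∀ i : Fin n, 0 < L i i) ∧ A = Lᵀ * L) →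
        ∀ i j : Fin n, (j : ℕ) + b < (i : ℕ) → L i j = 0) := by
  obtain ⟨L, hL⟩ := exists_isReverseCholeskyFactor hA
  refine ⟨⟨L, hL, fun L' hL' => IsReverseCholeskyFactor.unique hL' hL⟩, fun L' hL' => ?_⟩
  exact IsReverseCholeskyFactor.apply_eq_zero_of_pattern hL' (P := fun i j => (j : ℕ) + b < i)
    (fun i j k hij hik => hij.trans hik) (fun i j h => hband i j (Or.inl h))
end

section
/- Let A, D be real M×M matrices and B, C real N×N matrices with C = LᵀL and D = VᵀV for invertible L, V, and let F be a real M×N matrix. Set à = V⁻ᵀ A V⁻¹, B̃ = L⁻ᵀ B L⁻¹, G = V⁻ᵀ F L⁻¹. Let p₁,…,p_J and q₁,…,q_J be real shifts such that B − p_j C and A − q_j D are invertible for every j. Suppose the matrices X₀ = 0, X_{j−1/2}, X_j (for j = 1,…,J) satisfy the ADI recurrences X_{j−1/2} (B̃ − p_j I) = G − (Ã − p_j I) X_{j−1} and (Ã − q_j I) X_j = G − X_{j−1/2} (B̃ − q_j I). Then the matrices W_j := V⁻¹ X_j L and W_{j−1/2} := Vᵀ X_{j−1/2} L⁻ᵀ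 satisfy W₀ = 0, W_{j−1/2} = (F − (A − p_j D) W_{j−1}) (B − p_j C)⁻¹ and W_j = (A − q_j D)⁻¹ (F − W_{j−1/2} (B − q_j C)) for every j = 1,…,J. -/
/-!
The congruence `Z ↦ Vᵀ Z L` maps `Ã − q I` to `A − q D` (as `Vᵀ (Ã − q I) V`), `B̃ − p I` to
`B − p C` (as `Lᵀ (B̃ − p I) L`) and `G` to `F`. Applying it to each ADI equation therefore turns
it into the corresponding generalised step for `W_j = V⁻¹ X_j L` and `W_{j−1/2} = Vᵀ X_{j−1/2} L⁻ᵀ`,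
which is then solved using the invertibility of `B − p_j C` and `A − q_j D`.
-/

open Matrix

namespace Matrix

variable {m n R : Type*} [Fintype m] [DecidableEq m] [Fintype n] [DecidableEq n] [CommRing R]

theorem transpose_mul_congr_sub_smul_one_mul {L : Matrix n n R} (hL : IsUnit L)
    (B : Matrix n n R) (p : R) :
    Lᵀ * ((L⁻¹)ᵀ * B * L⁻¹ - p • 1) * L = B - p • (Lᵀ * L) := by
  have hL' : IsUnit L.det := (isUnit_iff_isUnit_det L).mp hL
  have hLT : Lᵀ * (L⁻¹)ᵀ = 1 := by rw [← transpose_mul, nonsing_inv_mul _ hL', transpose_one]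
  simp only [Matrix.mul_sub, Matrix.sub_mul, Matrix.mul_smul, Matrix.smul_mul, Matrix.mul_one,
    ← Matrix.mul_assoc, hLT, Matrix.one_mul, nonsing_inv_mul_cancel_right _ _ hL']

theorem transpose_mul_congr_mul {V : Matrix m m R} {L : Matrix n n R} (hV : IsUnit V)
    (hL : IsUnit L) (F : Matrix m n R) :
    Vᵀ * ((V⁻¹)ᵀ * F * L⁻¹) * L = F := by
  have hV' : IsUnit V.det := (isUnit_iff_isUnit_det V).mp hV
  have hL' : IsUnit L.det := (isUnit_iff_isUnit_det L).mp hL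
  have hVT : Vᵀ * (V⁻¹)ᵀ = 1 := by rw [← transpose_mul, nonsing_inv_mul _ hV', transpose_one]
  simp only [← Matrix.mul_assoc, hVT, Matrix.one_mul, nonsing_inv_mul_cancel_right _ _ hL']

theorem transpose_mul_shifted_sylvester_mul {V : Matrix m m R} {L : Matrix n n R}
    (hV : IsUnit V) (hL : IsUnit L) (A : Matrix m m R) (B : Matrix n n R) (X Y : Matrix m n R)
    (p q : R) :
    Vᵀ * (Y * ((L⁻¹)ᵀ * B * L⁻¹ - p • 1) + ((V⁻¹)ᵀ * A * V⁻¹ - q • 1) * X) * L =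
      (Vᵀ * Y * (L⁻¹)ᵀ) * (B - p • (Lᵀ * L)) + (A - q • (Vᵀ * V)) * (V⁻¹ * X * L) := by
  have hV' : IsUnit V.det := (isUnit_iff_isUnit_det V).mp hV
  have hL' : IsUnit L.det := (isUnit_iff_isUnit_det L).mp hL
  have hTL (Z : Matrix n n R) : (L⁻¹)ᵀ * (Lᵀ * Z) = Z := by
    rw [← Matrix.mul_assoc, ← transpose_mul, mul_nonsing_inv _ hL', transpose_one, Matrix.one_mul]
  rw [← transpose_mul_congr_sub_smul_one_mul hL B p,
    ← transpose_mul_congr_sub_smul_one_mul hV A q]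
  simp only [Matrix.mul_add, Matrix.add_mul, Matrix.mul_assoc, hTL,
    mul_nonsing_inv_cancel_left _ _ hV']

variable {V : Matrix m m R} {L : Matrix n n R} {A : Matrix m m R} {B : Matrix n n R}
  {F X Y : Matrix m n R}

theorem adi_half_step_change_of_variables (hV : IsUnit V) (hL : IsUnit L) {p : R}
    (hBp : IsUnit (B - p • (Lᵀ * L)))
    (h : Y * ((L⁻¹)ᵀ * B * L⁻¹ - p • 1) =
      (V⁻¹)ᵀ * F * L⁻¹ - ((V⁻¹)ᵀ * A * V⁻¹ - p • 1) * X) :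
    Vᵀ * Y * (L⁻¹)ᵀ = (F - (A - p • (Vᵀ * V)) * (V⁻¹ * X * L)) * (B - p • (Lᵀ * L))⁻¹ := by
  have hsum := congrArg (fun Z => Vᵀ * Z * L) (eq_sub_iff_add_eq.mp h)
  simp only [transpose_mul_shifted_sylvester_mul hV hL, transpose_mul_congr_mul hV hL] at hsum
  rw [← eq_sub_of_add_eq hsum,
    mul_nonsing_inv_cancel_right _ _ ((isUnit_iff_isUnit_det _).mp hBp)]

theorem adi_full_step_change_of_variables (hV : IsUnit V) (hL : IsUnit L) {q : R}
    (hAq : IsUnit (A - q • (Vᵀ * V)))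
    (h : ((V⁻¹)ᵀ * A * V⁻¹ - q • 1) * X =
      (V⁻¹)ᵀ * F * L⁻¹ - Y * ((L⁻¹)ᵀ * B * L⁻¹ - q • 1)) :
    V⁻¹ * X * L = (A - q • (Vᵀ * V))⁻¹ * (F - (Vᵀ * Y * (L⁻¹)ᵀ) * (B - q • (Lᵀ * L))) := by
  have hsum := congrArg (fun Z => Vᵀ * Z * L) (eq_sub_iff_add_eq'.mp h)
  simp only [transpose_mul_shifted_sylvester_mul hV hL, transpose_mul_congr_mul hV hL] at hsum
  rw [← eq_sub_of_add_eq' hsum,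
    nonsing_inv_mul_cancel_left _ _ ((isUnit_iff_isUnit_det _).mp hAq)]

end Matrix

/-- The change of variables `W_j = V⁻¹ X_j L`, `W_{j−1/2} = Vᵀ X_{j−1/2} L⁻ᵀ`
transforms the ADI iteration for the standard Sylvester equation `Ã X − X B̃ = G`
(where `Ã = V⁻ᵀ A V⁻¹`, `B̃ = L⁻ᵀ B L⁻¹`, `G = V⁻ᵀ F L⁻¹`) into the generalised ADI
iteration of Algorithm 2.  Here `Xh j` denotes the half-step iterate `X_{j−1/2}`. -/
theorem generalised_ADI_change_of_variables (M N : ℕ)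
    (A D : Matrix (Fin M) (Fin M) ℝ) (B C : Matrix (Fin N) (Fin N) ℝ)
    (F : Matrix (Fin M) (Fin N) ℝ)
    (L : Matrix (Fin N) (Fin N) ℝ) (V : Matrix (Fin M) (Fin M) ℝ)
    (hC : C = Lᵀ * L) (hD : D = Vᵀ * V) (hL : IsUnit L) (hV : IsUnit V)
    (J : ℕ) (p q : ℕ → ℝ)
    (hBpC : ∀ j, 1 ≤ j → j ≤ J → IsUnit (B - p j • C))
    (hAqD : ∀ j, 1 ≤ j → j ≤ J → IsUnit (A - q j • D))
    (X Xh : ℕ → Matrix (Fin M) (Fin N) ℝ)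
    (hX0 : X 0 = 0)
    (hhalf : ∀ j, 1 ≤ j → j ≤ J →
      Xh j * (((L⁻¹)ᵀ * B * L⁻¹) - p j • (1 : Matrix (Fin N) (Fin N) ℝ)) =
        ((V⁻¹)ᵀ * F * L⁻¹) -
          (((V⁻¹)ᵀ * A * V⁻¹) - p j • (1 : Matrix (Fin M) (Fin M) ℝ)) * X (j - 1))
    (hfull : ∀ j, 1 ≤ j → j ≤ J →
      (((V⁻¹)ᵀ * A * V⁻¹) - q j • (1 : Matrix (Fin M) (Fin M) ℝ)) * X j =
        ((V⁻¹)ᵀ * F * L⁻¹) -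
          Xh j * (((L⁻¹)ᵀ * B * L⁻¹) - q j • (1 : Matrix (Fin N) (Fin N) ℝ))) :
    V⁻¹ * X 0 * L = 0 ∧
    (∀ j, 1 ≤ j → j ≤ J →
      Vᵀ * Xh j * (L⁻¹)ᵀ =
        (F - (A - p j • D) * (V⁻¹ * X (j - 1) * L)) * (B - p j • C)⁻¹) ∧
    (∀ j, 1 ≤ j → j ≤ J →
      V⁻¹ * X j * L =
        (A - q j • D)⁻¹ * (F - (Vᵀ * Xh j * (L⁻¹)ᵀ) * (B - q j • C))) := by
  subst hC hD
  exact ⟨by rw [hX0, Matrix.mul_zero, Matrix.zero_mul],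
    fun j hj1 hj2 => adi_half_step_change_of_variables hV hL (hBpC j hj1 hj2) (hhalf j hj1 hj2),
    fun j hj1 hj2 => adi_full_step_change_of_variables hV hL (hAqD j hj1 hj2) (hfull j hj1 hj2)⟩
end

section
/- Let a < b be real numbers, let a = x₀ < x₁ < ⋯ < xₙ = b be a partition, and let u : ℝ → ℝ be a continuous function on [a,b] whose restriction to each subinterval [x_{i−1}, x_i] agrees with a polynomial, with u(a) = u(b) = 0 and u not identically zero on [a,b]. Let u' denote its (piecewise, almost-everywhere defined) derivative, let ω ≥ 0, and let λ > 0 satisfy ∫ₐᵇ u(x)² dx = λ · ( ∫ₐᵇ u'(x)² dx + (ω²/2) ∫ₐᵇ u(x)² dx ). Then λ ≤ (b − a)² / π². -/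
/-!
Wirtinger's inequality `(π/(b-a))² ∫ u² ≤ ∫ u'²` via Picone's identity. With `c = π/(b-a)` and
the ground state `y = sin (c (t - a))`, which is positive on `(a, b)`, the boundary term
`F = c cot (c (t - a)) u²` satisfies `u'² - c² u² - F' = (u' - c cot (c (t - a)) u)² ≥ 0` on each
cell. Integrating cell by cell, the values of `F` telescope to `F b - F a`, and `F` tends to `0`
at `a` and `b` because `u` vanishes there to first order. The Wirtinger bound, inserted into the
Rayleigh-quotient identity for `λ`, gives `λ c² ≤ 1`.
-/

open scoped Polynomial
open intervalIntegral

open Real Set Filter Topology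

theorem continuousAt_sq_div_sin_mul_sub {f : ℝ → ℝ} {c z : ℝ} (hf : DifferentiableAt ℝ f z)
    (hfz : f z = 0) (hc : c ≠ 0) :
    ContinuousAt (fun t => f t ^ 2 / sin (c * (t - z))) z := by
  -- `f t = (t - z) dslope f z t` and `sin θ = θ sinc θ` cancel the singular factor `t - z`.
  have hfactor : (fun t => f t ^ 2 / sin (c * (t - z))) =
      fun t => (t - z) * dslope f z t ^ 2 / (c * sinc (c * (t - z))) := by
    funext t
    rcases eq_or_ne t z with rfl | ht
    · simp [hfz]
    · have hft : f t = (t - z) * dslope f z t := by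
        simpa [hfz] using (sub_smul_dslope f z t).symm
      have hsin : sin (c * (t - z)) = c * (t - z) * sinc (c * (t - z)) := by
        rw [sinc_of_ne_zero (mul_ne_zero hc (sub_ne_zero.mpr ht)), mul_div_cancel₀]
        exact mul_ne_zero hc (sub_ne_zero.mpr ht)
      rw [hft, hsin, ← mul_div_mul_left _ (c * sinc (c * (t - z))) (sub_ne_zero.mpr ht)]
      ring
  rw [hfactor]
  refine ContinuousAt.div ?_ ?_ (by simpa using hc)
  · exact (continuousAt_id.sub continuousAt_const).mul
      ((continuousAt_dslope_same.mpr hf).pow 2)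
  · exact continuousAt_const.mul (continuous_sinc.continuousAt.comp (by fun_prop))

/-- Picone's boundary term `f² y'/y` for the solution `y = sin (c (t - z))` of `y'' + c² y = 0`. -/
noncomputable def piconeTerm (c z : ℝ) (f : ℝ → ℝ) (t : ℝ) : ℝ :=
  c * cos (c * (t - z)) * (f t ^ 2 / sin (c * (t - z)))

theorem hasDerivAt_piconeTerm {f : ℝ → ℝ} {f' c z t : ℝ} (hf : HasDerivAt f f' t)
    (hs : sin (c * (t - z)) ≠ 0) :
    HasDerivAt (piconeTerm c z f)
      (2 * (c * cot (c * (t - z))) * f t * f' - (c ^ 2 + (c * cot (c * (t - z))) ^ 2) * f t ^ 2)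
      t := by
  have hθ : HasDerivAt (fun τ => c * (τ - z)) c t := by
    simpa using ((hasDerivAt_id t).sub_const z).const_mul c
  have h := (((hasDerivAt_cos _).comp t hθ).const_mul c).mul
    ((hf.pow 2).div ((hasDerivAt_sin _).comp t hθ) hs)
  refine h.congr_deriv ?_
  simp only [Function.comp_apply, Pi.pow_apply, Pi.div_apply, cot_eq_cos_div_sin]
  field_simp
  simp only [Nat.cast_ofNat, Nat.add_one_sub_one, pow_one]
  ring

theorem piconeTerm_neg_of_mul_eq_pi {c a b : ℝ} (hc : c * (b - a) = π) (f : ℝ → ℝ) :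
    piconeTerm (-c) b f = piconeTerm c a f := by
  funext t
  have hθ : -c * (t - b) = π - c * (t - a) := by linear_combination hc
  simp only [piconeTerm, hθ, cos_pi_sub, sin_pi_sub]
  ring

theorem sin_mul_sub_pos {c a b t : ℝ} (hc : c * (b - a) = π) (ht : t ∈ Ioo a b) :
    0 < sin (c * (t - a)) := by
  have hc0 : 0 < c := pos_of_mul_pos_left (hc ▸ pi_pos) (by linarith [ht.1, ht.2])
  refine sin_pos_of_pos_of_lt_pi (mul_pos hc0 (by linarith [ht.1])) ?_
  rw [← hc]
  exact mul_lt_mul_of_pos_left (by linarith [ht.2]) hc0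

theorem continuousOn_piconeTerm {f : ℝ → ℝ} {c a b s e : ℝ} (hc : c * (b - a) = π)
    (hf : Differentiable ℝ f) (has : a ≤ s) (heb : e ≤ b)
    (hfa : s = a → f a = 0) (hfb : e = b → f b = 0) :
    ContinuousOn (piconeTerm c a f) (Icc s e) := by
  have hc0 : c ≠ 0 := left_ne_zero_of_mul (hc ▸ pi_ne_zero)
  intro t ht
  refine ContinuousAt.continuousWithinAt ?_
  rcases (has.trans ht.1).eq_or_lt with rfl | hat
  · exact (continuousAt_const.mul (by fun_prop)).mul
      (continuousAt_sq_div_sin_mul_sub (hf _) (hfa (le_antisymm ht.1 has)) hc0)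
  rcases (ht.2.trans heb).eq_or_lt with rfl | htb
  · rw [← piconeTerm_neg_of_mul_eq_pi hc]
    exact (continuousAt_const.mul (by fun_prop)).mul
      (continuousAt_sq_div_sin_mul_sub (hf _) (hfb (le_antisymm heb ht.2)) (neg_ne_zero.mpr hc0))
  · exact (hasDerivAt_piconeTerm (hf t).hasDerivAt
      (sin_mul_sub_pos hc ⟨hat, htb⟩).ne').continuousAt

theorem piconeTerm_sub_le_integral {f f' : ℝ → ℝ} {c a b s e : ℝ} (hc : c * (b - a) = π)
    (hf : ∀ t, HasDerivAt f (f' t) t) (hf' : Continuous f')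
    (has : a ≤ s) (hse : s ≤ e) (heb : e ≤ b) (hfa : s = a → f a = 0) (hfb : e = b → f b = 0) :
    piconeTerm c a f e - piconeTerm c a f s ≤ ∫ t in s..e, (f' t ^ 2 - c ^ 2 * f t ^ 2) := by
  have hfd : Differentiable ℝ f := fun t => (hf t).differentiableAt
  refine sub_le_integral_of_hasDeriv_right_of_le (g' := fun t =>
    2 * (c * cot (c * (t - a))) * f t * f' t - (c ^ 2 + (c * cot (c * (t - a))) ^ 2) * f t ^ 2) hse
    (continuousOn_piconeTerm hc hfd has heb hfa hfb) (fun t ht => ?_)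
    ((hf'.pow 2).sub (continuous_const.mul (hfd.continuous.pow 2))).integrableOn_Icc
    (fun t ht => ?_)
  · exact (hasDerivAt_piconeTerm (hf t)
      (sin_mul_sub_pos hc ⟨has.trans_lt ht.1, ht.2.trans_le heb⟩).ne').hasDerivWithinAt
  · -- Picone's identity: the defect is a perfect square.
    nlinarith [sq_nonneg (f' t - c * cot (c * (t - a)) * f t)]

theorem integral_sq_pos_of_ne_zero {u : ℝ → ℝ} {a b t : ℝ} (hu : ContinuousOn u (Icc a b))
    (ht : t ∈ Ioo a b) (hut : u t ≠ 0) : 0 < ∫ τ in a..b, u τ ^ 2 := by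
  have hab : a < b := ht.1.trans ht.2
  rw [integral_pos_iff_support_of_nonneg_ae (MeasureTheory.ae_of_all _ fun τ => sq_nonneg (u τ))
    ((hu.pow 2).intervalIntegrable_of_Icc hab.le)]
  refine ⟨hab, MeasureTheory.Measure.measure_pos_of_mem_nhds _
    (inter_mem ?_ (Ioc_mem_nhds ht.1 ht.2))⟩
  have hcont : ContinuousAt u t := hu.continuousAt (Icc_mem_nhds ht.1 ht.2)
  filter_upwards [hcont.eventually_ne hut] with τ hτ using pow_ne_zero 2 hτ

theorem sq_pi_div_mul_integral_sq_le_sum_integral_derivative_sq {a b : ℝ} (hab : a < b)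
    {n : ℕ} {x : ℕ → ℝ} (hx0 : x 0 = a) (hxn : x n = b) (hmono : ∀ i < n, x i < x (i + 1))
    {u : ℝ → ℝ} (hu : ContinuousOn u (Icc a b)) {Q : ℕ → ℝ[X]}
    (hQ : ∀ i < n, ∀ t ∈ Icc (x i) (x (i + 1)), u t = (Q i).eval t)
    (hua : u a = 0) (hub : u b = 0) :
    (π / (b - a)) ^ 2 * ∫ t in a..b, u t ^ 2 ≤
      ∑ i ∈ Finset.range n, ∫ t in x i..x (i + 1), (Q i).derivative.eval t ^ 2 := by
  set c := π / (b - a)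
  have hc : c * (b - a) = π := div_mul_cancel₀ π (sub_pos.mpr hab).ne'
  have hx : MonotoneOn x (Iic n) := (strictMonoOn_Iic_of_lt_succ hmono).monotoneOn
  have hxa : ∀ i ≤ n, a ≤ x i := fun i hi => hx0 ▸ hx (Nat.zero_le _) hi (Nat.zero_le _)
  have hxb : ∀ i ≤ n, x i ≤ b := fun i hi => hxn ▸ hx hi (mem_Iic.mpr le_rfl) hi
  have hcell : ∀ i < n, piconeTerm c a u (x (i + 1)) - piconeTerm c a u (x i) ≤
      (∫ t in x i..x (i + 1), (Q i).derivative.eval t ^ 2) -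
        c ^ 2 * ∫ t in x i..x (i + 1), u t ^ 2 := by
    intro i hi
    have hle := (hmono i hi).le
    have hQu : EqOn (fun t => (Q i).eval t ^ 2) (fun t => u t ^ 2) (uIcc (x i) (x (i + 1))) := by
      rw [uIcc_of_le hle]
      exact fun t ht => by simp only [hQ i hi t ht]
    have hpicone := piconeTerm_sub_le_integral hc (Q i).hasDerivAt (Q i).derivative.continuous
      (hxa i hi.le) hle (hxb (i + 1) hi)
      (fun h => by rw [← h, ← hQ i hi _ (left_mem_Icc.mpr hle), h, hua])
      (fun h => by rw [← h, ← hQ i hi _ (right_mem_Icc.mpr hle), h, hub])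
    rwa [integral_sub
      ((by fun_prop : Continuous fun t => (Q i).derivative.eval t ^ 2).intervalIntegrable _ _)
      ((by fun_prop : Continuous fun t => c ^ 2 * (Q i).eval t ^ 2).intervalIntegrable _ _),
      integral_const_mul, integral_congr hQu,
      piconeTerm, piconeTerm, ← hQ i hi _ (left_mem_Icc.mpr hle),
      ← hQ i hi _ (right_mem_Icc.mpr hle)] at hpicone
  have hsum := Finset.sum_le_sum fun i hi => hcell i (Finset.mem_range.mp hi)
  rw [Finset.sum_range_sub (fun i => piconeTerm c a u (x i)), Finset.sum_sub_distrib,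
    ← Finset.mul_sum, sum_integral_adjacent_intervals (f := fun t => u t ^ 2) fun i hi =>
      ((hu.mono (Icc_subset_Icc (hxa i hi.le) (hxb (i + 1) hi))).pow 2).intervalIntegrable_of_Icc
        (hmono i hi).le, hx0, hxn] at hsum
  -- `sin` vanishes at `a` and `b`, so both values are `_ / 0 = 0`.
  have hFa : piconeTerm c a u a = 0 := by simp [piconeTerm]
  have hFb : piconeTerm c a u b = 0 := by simp [piconeTerm, hc]
  linarith

theorem spectral_upper_bound_dirichlet_general (a b : ℝ) (hab : a < b)
    (n : ℕ) (x : ℕ → ℝ) (hx0 : x 0 = a) (hxn : x n = b)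
    (hmono : ∀ i < n, x i < x (i + 1))
    (u : ℝ → ℝ) (hu : ContinuousOn u (Set.Icc a b))
    (Q : ℕ → Polynomial ℝ)
    (hQ : ∀ i < n, ∀ t ∈ Set.Icc (x i) (x (i + 1)), u t = (Q i).eval t)
    (hua : u a = 0) (hub : u b = 0)
    (hne : ∃ t ∈ Set.Icc a b, u t ≠ 0)
    (ω : ℝ) (lam : ℝ) (hlam : 0 < lam)
    (heq : (∫ t in a..b, (u t) ^ 2) =
      lam * ((∑ i ∈ Finset.range n,
          ∫ t in (x i)..(x (i + 1)), ((Q i).derivative.eval t) ^ 2) +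
        (ω ^ 2 / 2) * ∫ t in a..b, (u t) ^ 2)) :
    lam ≤ (b - a) ^ 2 / Real.pi ^ 2 := by
  obtain ⟨t, ht, hut⟩ := hne
  have ht' : t ∈ Ioo a b :=
    ⟨ht.1.lt_of_ne (by rintro rfl; exact hut hua), ht.2.lt_of_ne (by rintro rfl; exact hut hub)⟩
  have hpos := integral_sq_pos_of_ne_zero hu ht' hut
  have hwirtinger :=
    sq_pi_div_mul_integral_sq_le_sum_integral_derivative_sq hab hx0 hxn hmono hu hQ hua hub
  have hle : lam * (π / (b - a)) ^ 2 * ∫ t in a..b, u t ^ 2 ≤ 1 * ∫ t in a..b, u t ^ 2 := by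
    nth_rewrite 2 [heq]
    rw [mul_assoc, one_mul]
    gcongr
    have : 0 ≤ ω ^ 2 / 2 * ∫ t in a..b, u t ^ 2 := by positivity
    linarith
  have hlam_le := le_of_mul_le_mul_right hle hpos
  rwa [div_pow, mul_div_assoc', div_le_one (pow_pos (sub_pos.mpr hab) 2),
    ← le_div_iff₀ (by positivity)] at hlam_le

/-- (Dirichlet upper bound in the spectral lemma.)  Let `u` be a continuous
piecewise-polynomial function on `[a, b]` (with pieces `Q i` on the cells
`[x i, x (i+1)]` of the partition `a = x 0 < ⋯ < x n = b`), vanishing at the endpoints and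
not identically zero.  If `λ > 0` satisfies
`∫ₐᵇ u² = λ (∑ᵢ ∫ (Qᵢ)'² + (ω²/2) ∫ₐᵇ u²)` with `ω ≥ 0`, then `λ ≤ (b−a)²/π²`. -/
theorem spectral_upper_bound_dirichlet (a b : ℝ) (hab : a < b)
    (n : ℕ) (hn : 0 < n) (x : ℕ → ℝ) (hx0 : x 0 = a) (hxn : x n = b)
    (hmono : ∀ i < n, x i < x (i + 1))
    (u : ℝ → ℝ) (hu : ContinuousOn u (Set.Icc a b))
    (Q : ℕ → Polynomial ℝ)
    (hQ : ∀ i < n, ∀ t ∈ Set.Icc (x i) (x (i + 1)), u t = (Q i).eval t)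
    (hua : u a = 0) (hub : u b = 0)
    (hne : ∃ t ∈ Set.Icc a b, u t ≠ 0)
    (ω : ℝ) (hω : 0 ≤ ω) (lam : ℝ) (hlam : 0 < lam)
    (heq : (∫ t in a..b, (u t) ^ 2) =
      lam * ((∑ i ∈ Finset.range n,
          ∫ t in (x i)..(x (i + 1)), ((Q i).derivative.eval t) ^ 2) +
        (ω ^ 2 / 2) * ∫ t in a..b, (u t) ^ 2)) :
    lam ≤ (b - a) ^ 2 / Real.pi ^ 2 :=
  spectral_upper_bound_dirichlet_general a b hab n x hx0 hxn hmono u hu Q hQ hua hub hne ω lam hlam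
    heq
end

section
/- Let a < b be real numbers, let a = x₀ < x₁ < ⋯ < xₙ = b be a partition with h := min over i of (x_i − x_{i−1}), and let p ≥ 1. Let u : ℝ → ℝ be a continuous function on [a,b] whose restriction to each subinterval [x_{i−1}, x_i] agrees with a polynomial of degree at most p, with u not identically zero on [a,b]. Let u' denote its (piecewise, almost-everywhere defined) derivative, let ω ≥ 0, and let λ > 0 satisfy ∫ₐᵇ u(x)² dx = λ · ( ∫ₐᵇ u'(x)² dx + (ω²/2) ∫ₐᵇ u(x)² dx ). Then λ ≥ 2h² / (24 p⁴ + ω² h²). -/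
/-!
On a cell `[c, d]` of width `w`, expand a polynomial `q` of degree `≤ p` in the Legendre
polynomials `L k` of `[c, d]` (Rodrigues' formula, normalised by `L k (d) = w ^ k`). They are
orthogonal with `∫ (L k)² = w ^ (2k+1) / (2k+1)`, and integration by parts gives
`∫ L j · (L k)' = w ^ (j+k) (1 - (-1) ^ (j+k))` for `j < k` and `0` otherwise. So the Legendre
coefficients of `q'` are explicit combinations of those of `q`, and Cauchy–Schwarz together
with `∑_{j < k ≤ p, j + k odd} (2j+1)(2k+1) = p (p+1)² (p+2) / 4 ≤ 3 p⁴` gives the inverse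
inequality `∫ q'² ≤ 12 p⁴ w⁻² ∫ q²`. Summed over the cells this bounds `∑ᵢ ∫ (Qᵢ)'²` by
`12 p⁴ h⁻² ∫ u²`, and the defining identity for `λ` turns that into the lower bound on `λ`.
-/

open scoped Polynomial
open intervalIntegral

open Polynomial Finset
open scoped Nat

theorem eval_iterate_derivative_X_sub_C_pow_mul {R : Type*} [CommRing R] (r : R) (k : ℕ)
    (B : R[X]) : (derivative^[k] ((X - C r) ^ k * B)).eval r = k ! * B.eval r := by
  rw [iterate_derivative_mul, eval_finsetSum, sum_eq_single_of_mem 0 (mem_range.mpr k.succ_pos)]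
  · simp [iterate_derivative_X_sub_pow_self]
  · intro i hi hi0
    simp [iterate_derivative_X_sub_pow, Nat.sub_sub_self (mem_range_succ_iff.mp hi), hi0]

theorem integral_eval_mul_eval_derivative (f g : ℝ[X]) (a b : ℝ) :
    ∫ t in a..b, f.eval t * (derivative g).eval t =
      f.eval b * g.eval b - f.eval a * g.eval a - ∫ t in a..b, (derivative f).eval t * g.eval t :=
  integral_mul_deriv_eq_deriv_mul (fun t _ => f.hasDerivAt t) (fun t _ => g.hasDerivAt t)
    ((derivative f).continuous.intervalIntegrable _ _)
    ((derivative g).continuous.intervalIntegrable _ _)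

section Legendre

variable (c d : ℝ)

noncomputable def rodriguesOn (k : ℕ) : ℝ[X] := ((X - C c) * (X - C d)) ^ k

noncomputable def legendreOn (k : ℕ) : ℝ[X] :=
  C (k ! : ℝ)⁻¹ * derivative^[k] (rodriguesOn c d k)

theorem rodriguesOn_comm (k : ℕ) : rodriguesOn c d k = rodriguesOn d c k := by
  rw [rodriguesOn, rodriguesOn, mul_comm]

theorem legendreOn_comm (k : ℕ) : legendreOn c d k = legendreOn d c k := by
  rw [legendreOn, legendreOn, rodriguesOn_comm]

theorem monic_rodriguesOn (k : ℕ) : (rodriguesOn c d k).Monic :=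
  ((monic_X_sub_C c).mul (monic_X_sub_C d)).pow k

theorem natDegree_rodriguesOn (k : ℕ) : (rodriguesOn c d k).natDegree = 2 * k := by
  rw [rodriguesOn, ((monic_X_sub_C c).mul (monic_X_sub_C d)).natDegree_pow,
    (monic_X_sub_C c).natDegree_mul (monic_X_sub_C d), natDegree_X_sub_C, natDegree_X_sub_C]
  ring

theorem isRoot_iterate_derivative_rodriguesOn {m k : ℕ} (hm : m < k) :
    (derivative^[m] (rodriguesOn c d k)).IsRoot c := by
  have hdvd : (X - C c) ^ k ∣ rodriguesOn c d k := by
    rw [rodriguesOn, mul_pow]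
    exact dvd_mul_right _ _
  exact dvd_iff_isRoot.mp ((dvd_pow_self _ (Nat.sub_ne_zero_of_lt hm)).trans
    (pow_sub_dvd_iterate_derivative_of_pow_dvd m hdvd))

theorem eval_legendreOn_left (k : ℕ) : (legendreOn c d k).eval c = (c - d) ^ k := by
  rw [legendreOn, eval_mul, eval_C, rodriguesOn, mul_pow, eval_iterate_derivative_X_sub_C_pow_mul]
  simp [Nat.factorial_ne_zero]

theorem eval_legendreOn_right (k : ℕ) : (legendreOn c d k).eval d = (d - c) ^ k := by
  rw [legendreOn_comm, eval_legendreOn_left]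

theorem natDegree_legendreOn_le (k : ℕ) : (legendreOn c d k).natDegree ≤ k :=
  (natDegree_C_mul_le _ _).trans <| (natDegree_iterate_derivative _ _).trans <| by
    rw [natDegree_rodriguesOn]; omega

theorem coeff_legendreOn_self (k : ℕ) : (legendreOn c d k).coeff k = k.centralBinom := by
  have hlead : (rodriguesOn c d k).coeff (k + k) = 1 := by
    rw [← two_mul, ← natDegree_rodriguesOn c d k]
    exact monic_rodriguesOn c d k
  rw [legendreOn, coeff_C_mul, coeff_iterate_derivative, hlead, ← two_mul,
    Nat.descFactorial_eq_factorial_mul_choose, ← Nat.centralBinom_eq_two_mul_choose]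
  simp [Nat.factorial_ne_zero]

theorem integral_eval_mul_eval_iterate_derivative_rodriguesOn {m k : ℕ} (hm : m ≤ k)
    (g : ℝ[X]) :
    ∫ t in c..d, g.eval t * (derivative^[m] (rodriguesOn c d k)).eval t =
      (-1) ^ m * ∫ t in c..d, (derivative^[m] g).eval t * (rodriguesOn c d k).eval t := by
  induction m generalizing g with
  | zero => simp
  | succ m ih =>
    have hc := isRoot_iterate_derivative_rodriguesOn c d (Nat.lt_of_succ_le hm)
    have hd := isRoot_iterate_derivative_rodriguesOn d c (Nat.lt_of_succ_le hm)
    rw [← rodriguesOn_comm] at hd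
    rw [Function.iterate_succ_apply', integral_eval_mul_eval_derivative, hc.eq_zero, hd.eq_zero,
      ih (by omega), Function.iterate_succ_apply]
    ring

theorem degree_legendreOn (k : ℕ) : (legendreOn c d k).degree = k :=
  degree_eq_of_le_of_coeff_ne_zero (degree_le_of_natDegree_le (natDegree_legendreOn_le c d k))
    (by rw [coeff_legendreOn_self]; exact_mod_cast k.centralBinom_ne_zero)

theorem degree_derivative_legendreOn_lt (k : ℕ) : (derivative (legendreOn c d k)).degree < k :=
  degree_legendreOn c d k ▸ degree_derivative_lt (ne_zero_of_degree_gt <| by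
    rw [degree_legendreOn]; exact WithBot.bot_lt_coe k)

theorem integral_eval_mul_eval_legendreOn_eq_zero {g : ℝ[X]} {k : ℕ} (hg : g.degree < k) :
    ∫ t in c..d, g.eval t * (legendreOn c d k).eval t = 0 := by
  have hD : derivative^[k] g = 0 := by
    rcases eq_or_ne g 0 with rfl | hg0
    · exact iterate_derivative_zero
    · exact iterate_derivative_eq_zero ((natDegree_lt_iff_degree_lt hg0).mpr hg)
  simp_rw [legendreOn, eval_mul, eval_C, mul_left_comm _ (k ! : ℝ)⁻¹]
  rw [integral_const_mul, integral_eval_mul_eval_iterate_derivative_rodriguesOn c d le_rfl, hD]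
  simp

theorem integral_eval_legendreOn_mul_eval_derivative_legendreOn (j k : ℕ) :
    ∫ t in c..d, (legendreOn c d j).eval t * (derivative (legendreOn c d k)).eval t =
      if j < k then (d - c) ^ (j + k) * (1 - (-1) ^ (j + k)) else 0 := by
  split_ifs with hjk
  · rw [integral_eval_mul_eval_derivative, integral_eval_mul_eval_legendreOn_eq_zero c d
      ((degree_derivative_legendreOn_lt c d j).trans (by exact_mod_cast hjk)),
      eval_legendreOn_left, eval_legendreOn_left, eval_legendreOn_right, eval_legendreOn_right,
      show c - d = -1 * (d - c) by ring, mul_pow, mul_pow]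
    ring
  · simp_rw [mul_comm (eval _ (legendreOn c d j))]
    exact integral_eval_mul_eval_legendreOn_eq_zero c d
      ((degree_derivative_legendreOn_lt c d k).trans_le (by exact_mod_cast not_lt.mp hjk))

theorem degree_derivative_legendreOn_succ_sub_lt (m : ℕ) :
    (derivative (legendreOn c d (m + 1)) -
      C (2 * (2 * m + 1) : ℝ) * legendreOn c d m).degree < m := by
  rw [degree_lt_iff_coeff_zero]
  intro i hi
  rw [coeff_sub, coeff_derivative, coeff_C_mul]
  rcases hi.eq_or_lt with rfl | hlt
  · rw [coeff_legendreOn_self, coeff_legendreOn_self, sub_eq_zero]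
    exact_mod_cast (mul_comm _ _).trans (Nat.succ_mul_centralBinom_succ m)
  · rw [coeff_eq_zero_of_natDegree_lt ((natDegree_legendreOn_le c d _).trans_lt (by omega)),
      coeff_eq_zero_of_natDegree_lt ((natDegree_legendreOn_le c d _).trans_lt hlt)]
    ring

/- `(L (m+1))' - 2(2m+1) L m` has degree `< m`, so pairing `(L (m+1))'` with `L m` picks out
`2(2m+1) ∫ (L m)²`, while integration by parts evaluates that pairing as `2 (d - c) ^ (2m+1)`. -/
theorem integral_eval_legendreOn_sq (m : ℕ) :
    ∫ t in c..d, (legendreOn c d m).eval t ^ 2 = (d - c) ^ (2 * m + 1) / (2 * m + 1) := by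
  have hcross := integral_eval_legendreOn_mul_eval_derivative_legendreOn c d m (m + 1)
  have horth := integral_eval_mul_eval_legendreOn_eq_zero c d
    (degree_derivative_legendreOn_succ_sub_lt c d m)
  simp_rw [eval_sub, eval_mul, eval_C, sub_mul] at horth
  rw [integral_sub (Continuous.intervalIntegrable (by fun_prop) _ _)
    (Continuous.intervalIntegrable (by fun_prop) _ _)] at horth
  simp_rw [mul_assoc, integral_const_mul] at horth
  simp_rw [mul_comm (eval _ (legendreOn c d m)), if_pos m.lt_succ_self] at hcross
  rw [show m + (m + 1) = 2 * m + 1 by ring, Odd.neg_one_pow ⟨m, rfl⟩] at hcross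
  rw [eq_div_iff (by positivity)]
  simp_rw [sq]
  linear_combination (hcross - horth) / 2

theorem integral_eval_legendreOn_mul_eval_legendreOn (j k : ℕ) :
    ∫ t in c..d, (legendreOn c d j).eval t * (legendreOn c d k).eval t =
      if j = k then (d - c) ^ (2 * k + 1) / (2 * k + 1) else 0 := by
  rcases lt_trichotomy j k with hjk | rfl | hkj
  · rw [if_neg hjk.ne]
    exact integral_eval_mul_eval_legendreOn_eq_zero c d
      ((degree_legendreOn c d j).trans_lt (by exact_mod_cast hjk))
  · simp_rw [if_pos, ← sq]
    exact integral_eval_legendreOn_sq c d j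
  · simp_rw [if_neg hkj.ne', mul_comm (eval _ (legendreOn c d j))]
    exact integral_eval_mul_eval_legendreOn_eq_zero c d
      ((degree_legendreOn c d k).trans_lt (by exact_mod_cast hkj))

theorem legendreOn_zero : legendreOn c d 0 = 1 := by
  simp [legendreOn, rodriguesOn]

theorem exists_eq_sum_legendreOn {q : ℝ[X]} {p : ℕ} (hq : q.natDegree ≤ p) :
    ∃ a : ℕ → ℝ, q = ∑ k ∈ range (p + 1), C (a k) * legendreOn c d k := by
  induction p generalizing q with
  | zero =>
    refine ⟨fun _ => q.coeff 0, ?_⟩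
    rw [sum_range_one, legendreOn_zero, mul_one]
    exact eq_C_of_natDegree_le_zero hq
  | succ p ih =>
    set γ := q.coeff (p + 1) / (p + 1).centralBinom
    obtain ⟨a, ha⟩ := ih (q := q - C γ * legendreOn c d (p + 1)) <| by
      rw [natDegree_le_iff_coeff_eq_zero]
      intro i hi
      rw [coeff_sub, coeff_C_mul]
      rcases (Nat.succ_le_of_lt hi).eq_or_lt with rfl | hlt
      · rw [coeff_legendreOn_self,
          div_mul_cancel₀ _ (by exact_mod_cast Nat.centralBinom_ne_zero _), sub_self]
      · rw [coeff_eq_zero_of_natDegree_lt (hq.trans_lt hlt),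
          coeff_eq_zero_of_natDegree_lt ((natDegree_legendreOn_le c d _).trans_lt hlt), mul_zero,
          sub_zero]
    refine ⟨Function.update a (p + 1) γ, ?_⟩
    rw [sum_range_succ, Function.update_self, sum_congr rfl fun k hk => by
      rw [Function.update_of_ne (by simp only [mem_range] at hk; omega)], ← ha]
    ring

theorem integral_eval_mul_eval_sum (g : ℝ[X]) (s : Finset ℕ) (a : ℕ → ℝ)
    (f : ℕ → ℝ[X]) :
    ∫ t in c..d, g.eval t * (∑ k ∈ s, C (a k) * f k).eval t =
      ∑ k ∈ s, a k * ∫ t in c..d, g.eval t * (f k).eval t := by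
  simp_rw [eval_finsetSum, eval_mul, eval_C, mul_sum]
  rw [integral_finsetSum fun k _ => Continuous.intervalIntegrable (by fun_prop) _ _]
  simp_rw [mul_left_comm (g.eval _), integral_const_mul]

theorem integral_eval_legendreOn_mul_eval_sum_legendreOn {j : ℕ} {s : Finset ℕ} (hj : j ∈ s)
    (a : ℕ → ℝ) :
    ∫ t in c..d, (legendreOn c d j).eval t * (∑ k ∈ s, C (a k) * legendreOn c d k).eval t =
      a j * ((d - c) ^ (2 * j + 1) / (2 * j + 1)) := by
  simp_rw [integral_eval_mul_eval_sum, integral_eval_legendreOn_mul_eval_legendreOn, mul_ite,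
    mul_zero]
  rw [sum_ite_eq, if_pos hj]

theorem integral_eval_sum_legendreOn_sq (s : Finset ℕ) (a : ℕ → ℝ) :
    ∫ t in c..d, (∑ k ∈ s, C (a k) * legendreOn c d k).eval t ^ 2 =
      ∑ k ∈ s, a k ^ 2 * ((d - c) ^ (2 * k + 1) / (2 * k + 1)) := by
  simp_rw [sq, integral_eval_mul_eval_sum]
  refine sum_congr rfl fun k hk => ?_
  simp_rw [mul_comm _ (eval _ (legendreOn c d k)),
    integral_eval_legendreOn_mul_eval_sum_legendreOn c d hk, mul_assoc]

theorem integral_eval_legendreOn_mul_eval_derivative_sum_legendreOn (j p : ℕ) (a : ℕ → ℝ) :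
    ∫ t in c..d, (legendreOn c d j).eval t *
        (derivative (∑ k ∈ range (p + 1), C (a k) * legendreOn c d k)).eval t =
      (d - c) ^ j * ∑ k ∈ Ioc j p, a k * ((d - c) ^ k * (1 - (-1) ^ (j + k))) := by
  simp_rw [derivative_sum, derivative_C_mul, integral_eval_mul_eval_sum,
    integral_eval_legendreOn_mul_eval_derivative_legendreOn, mul_ite, mul_zero, ← sum_filter,
    mul_sum]
  refine sum_congr (by ext k; simp only [mem_filter, mem_range, mem_Ioc]; omega) fun k _ => ?_
  ring

end Legendre

theorem sum_range_two_mul_add_one (n : ℕ) : ∑ j ∈ range n, (2 * j + 1 : ℝ) = n ^ 2 := by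
  induction n with
  | zero => simp
  | succ n ih => rw [sum_range_succ, ih]; push_cast; ring

theorem sum_range_two_mul_add_one_mul_neg_one_pow (n : ℕ) :
    ∑ j ∈ range n, (2 * j + 1 : ℝ) * (-1) ^ (j + n) = -n := by
  induction n with
  | zero => simp
  | succ n ih =>
    simp_rw [sum_range_succ, ← add_assoc, pow_succ, ← mul_assoc, ← sum_mul, ih, ← two_mul,
      pow_mul, neg_one_sq, one_pow]
    push_cast
    ring

theorem sum_range_two_mul_add_one_mul_one_sub_neg_one_pow_sq (n : ℕ) :
    ∑ j ∈ range n, (2 * j + 1 : ℝ) * (1 - (-1) ^ (j + n)) ^ 2 = 2 * (n : ℝ) * (n + 1) := by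
  have hsq : ∀ j : ℕ, (2 * j + 1 : ℝ) * (1 - (-1) ^ (j + n)) ^ 2 =
      2 * (2 * j + 1) - 2 * ((2 * j + 1) * (-1) ^ (j + n)) := fun j => by
    rw [sub_sq, ← pow_mul, mul_comm _ 2, pow_mul, neg_one_sq, one_pow]
    ring
  simp_rw [hsq, sum_sub_distrib, ← mul_sum, sum_range_two_mul_add_one,
    sum_range_two_mul_add_one_mul_neg_one_pow]
  ring

theorem sum_range_sum_Ioc_mul_one_sub_neg_one_pow_sq (p : ℕ) :
    ∑ j ∈ range (p + 1), ∑ k ∈ Ioc j p,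
      (2 * j + 1 : ℝ) * (2 * k + 1) * (1 - (-1) ^ (j + k)) ^ 2 =
      (p : ℝ) * (p + 1) ^ 2 * (p + 2) := by
  induction p with
  | zero => simp
  | succ p ih =>
    rw [sum_range_succ, Ioc_self, sum_empty, add_zero,
      sum_congr rfl fun j hj => sum_Ioc_succ_top (Nat.le_of_lt_succ (mem_range.mp hj)) _,
      sum_add_distrib, ih]
    simp_rw [mul_right_comm _ (2 * ((p + 1 : ℕ) : ℝ) + 1)]
    rw [← sum_mul, sum_range_two_mul_add_one_mul_one_sub_neg_one_pow_sq]
    push_cast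
    ring

theorem natCast_mul_add_one_sq_mul_add_two_le (p : ℕ) :
    (p : ℝ) * (p + 1) ^ 2 * (p + 2) ≤ 12 * p ^ 4 := by
  rcases p with _ | p
  · simp
  · push_cast
    nlinarith [sq_nonneg (p : ℝ), pow_nonneg (Nat.cast_nonneg p : (0 : ℝ) ≤ p) 3,
      pow_nonneg (Nat.cast_nonneg p : (0 : ℝ) ≤ p) 4]

theorem sq_sum_mul_le_of_subset {ι : Type*} {s t : Finset ι} (hst : s ⊆ t) (a e N : ι → ℝ)
    (hN : ∀ k ∈ t, 0 < N k) :
    (∑ k ∈ s, a k * e k) ^ 2 ≤ (∑ k ∈ t, a k ^ 2 * N k) * ∑ k ∈ s, e k ^ 2 / N k :=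
  calc (∑ k ∈ s, a k * e k) ^ 2 ≤ (∑ k ∈ s, a k ^ 2 * N k) * ∑ k ∈ s, e k ^ 2 / N k :=
        sum_sq_le_sum_mul_sum_of_sq_le_mul s
          (fun k hk => by have := hN k (hst hk); positivity)
          (fun k hk => by have := hN k (hst hk); positivity)
          (fun k hk => by have := (hN k (hst hk)).ne'; field_simp; rfl)
    _ ≤ (∑ k ∈ t, a k ^ 2 * N k) * ∑ k ∈ s, e k ^ 2 / N k := by
        gcongr
        · exact sum_nonneg fun k hk => by have := hN k (hst hk); positivity
        · exact fun k hk _ => by have := hN k hk; positivity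

theorem sq_mul_le_of_mul_eq_sum {w β : ℝ} (hw : 0 < w) {j : ℕ} {s t : Finset ℕ}
    (hst : s ⊆ t) (a e : ℕ → ℝ)
    (hβ : β * (w ^ (2 * j + 1) / (2 * j + 1)) = w ^ j * ∑ k ∈ s, a k * (w ^ k * e k)) :
    β ^ 2 * (w ^ (2 * j + 1) / (2 * j + 1)) ≤
      (∑ k ∈ t, a k ^ 2 * (w ^ (2 * k + 1) / (2 * k + 1))) / w ^ 2 *
        ∑ k ∈ s, (2 * j + 1 : ℝ) * (2 * k + 1) * e k ^ 2 := by
  have hsq : β ^ 2 * (w ^ (2 * j + 1) / (2 * j + 1)) =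
      (2 * j + 1) / w * (∑ k ∈ s, a k * (w ^ k * e k)) ^ 2 := by
    rw [eq_div_of_mul_eq (by positivity) hβ]
    field_simp
    ring
  have hweight : ∑ k ∈ s, (w ^ k * e k) ^ 2 / (w ^ (2 * k + 1) / (2 * k + 1)) =
      (∑ k ∈ s, (2 * k + 1) * e k ^ 2) / w := by
    rw [sum_div]
    refine sum_congr rfl fun k _ => ?_
    field_simp
    ring
  have hCS := sq_sum_mul_le_of_subset hst a (fun k => w ^ k * e k)
    (fun k => w ^ (2 * k + 1) / (2 * k + 1)) fun k _ => by positivity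
  rw [hweight] at hCS
  rw [hsq]
  simp_rw [mul_assoc (2 * (j : ℝ) + 1), ← mul_sum]
  calc (2 * j + 1) / w * (∑ k ∈ s, a k * (w ^ k * e k)) ^ 2
      ≤ (2 * j + 1) / w * ((∑ k ∈ t, a k ^ 2 * (w ^ (2 * k + 1) / (2 * k + 1))) *
          ((∑ k ∈ s, (2 * k + 1) * e k ^ 2) / w)) := by
        gcongr
    _ = _ := by
        field_simp

theorem integral_eval_derivative_sq_le {c d : ℝ} (hcd : c < d) {q : ℝ[X]} {p : ℕ}
    (hq : q.natDegree ≤ p) :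
    ∫ t in c..d, (derivative q).eval t ^ 2 ≤
      12 * p ^ 4 / (d - c) ^ 2 * ∫ t in c..d, q.eval t ^ 2 := by
  have hw : 0 < d - c := sub_pos.mpr hcd
  obtain ⟨a, rfl⟩ := exists_eq_sum_legendreOn c d hq
  obtain ⟨β, hβ⟩ := exists_eq_sum_legendreOn c d
    ((natDegree_derivative_le _).trans ((Nat.sub_le _ _).trans hq))
  have hcoef : ∀ j ∈ range (p + 1), β j * ((d - c) ^ (2 * j + 1) / (2 * j + 1)) =
      (d - c) ^ j * ∑ k ∈ Ioc j p, a k * ((d - c) ^ k * (1 - (-1) ^ (j + k))) := fun j hj => by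
    rw [← integral_eval_legendreOn_mul_eval_sum_legendreOn c d hj β, ← hβ,
      integral_eval_legendreOn_mul_eval_derivative_sum_legendreOn]
  have hsub : ∀ j, Ioc j p ⊆ range (p + 1) := fun j k hk =>
    mem_range.mpr (Nat.lt_succ_of_le (mem_Ioc.mp hk).2)
  rw [hβ, integral_eval_sum_legendreOn_sq, integral_eval_sum_legendreOn_sq]
  set A := ∑ k ∈ range (p + 1), a k ^ 2 * ((d - c) ^ (2 * k + 1) / (2 * k + 1))
  have hA : 0 ≤ A := sum_nonneg fun k _ => by positivity
  calc ∑ j ∈ range (p + 1), β j ^ 2 * ((d - c) ^ (2 * j + 1) / (2 * j + 1))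
      ≤ ∑ j ∈ range (p + 1), A / (d - c) ^ 2 *
          ∑ k ∈ Ioc j p, (2 * j + 1 : ℝ) * (2 * k + 1) * (1 - (-1) ^ (j + k)) ^ 2 :=
        sum_le_sum fun j hj => sq_mul_le_of_mul_eq_sum hw (hsub j) a _ (hcoef j hj)
    _ = A / (d - c) ^ 2 * (p * (p + 1) ^ 2 * (p + 2)) := by
        rw [← mul_sum, sum_range_sum_Ioc_mul_one_sub_neg_one_pow_sq]
    _ ≤ 12 * p ^ 4 / (d - c) ^ 2 * A := by
        rw [div_mul_eq_mul_div, div_mul_eq_mul_div, mul_comm A]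
        gcongr ?_ * A / _
        exact natCast_mul_add_one_sq_mul_add_two_le p

theorem sq_mul_integral_eval_derivative_sq_le {c d h : ℝ} (hcd : c < d) (hh : 0 ≤ h)
    (hhw : h ≤ d - c) {q : ℝ[X]} {p : ℕ} (hq : q.natDegree ≤ p) :
    h ^ 2 * ∫ t in c..d, (derivative q).eval t ^ 2 ≤
      12 * p ^ 4 * ∫ t in c..d, q.eval t ^ 2 := by
  have hw : 0 < d - c := sub_pos.mpr hcd
  have hq' : 0 ≤ ∫ t in c..d, (derivative q).eval t ^ 2 :=
    integral_nonneg hcd.le fun _ _ => sq_nonneg _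
  calc h ^ 2 * ∫ t in c..d, (derivative q).eval t ^ 2
      ≤ (d - c) ^ 2 * (12 * p ^ 4 / (d - c) ^ 2 * ∫ t in c..d, q.eval t ^ 2) := by
        gcongr
        exact integral_eval_derivative_sq_le hcd hq
    _ = 12 * p ^ 4 * ∫ t in c..d, q.eval t ^ 2 := by
        field_simp

theorem spectral_lower_bound_general (a b : ℝ) (hab : a < b)
    (n : ℕ) (hn : 0 < n) (x : ℕ → ℝ) (hx0 : x 0 = a) (hxn : x n = b)
    (hmono : ∀ i < n, x i < x (i + 1))
    (h : ℝ)
    (hdef : h = (Finset.range n).inf' (Finset.nonempty_range_iff.mpr hn.ne')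
      (fun i => x (i + 1) - x i))
    (p : ℕ)
    (u : ℝ → ℝ) (hu : ContinuousOn u (Set.Icc a b))
    (Q : ℕ → Polynomial ℝ)
    (hdeg : ∀ i < n, (Q i).natDegree ≤ p)
    (hQ : ∀ i < n, ∀ t ∈ Set.Icc (x i) (x (i + 1)), u t = (Q i).eval t)
    (hne : ∃ t ∈ Set.Icc a b, u t ≠ 0)
    (ω : ℝ) (lam : ℝ) (hlam : 0 < lam)
    (heq : (∫ t in a..b, (u t) ^ 2) =
      lam * ((∑ i ∈ Finset.range n,
          ∫ t in (x i)..(x (i + 1)), ((Q i).derivative.eval t) ^ 2) +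
        (ω ^ 2 / 2) * ∫ t in a..b, (u t) ^ 2)) :
    2 * h ^ 2 / (24 * (p : ℝ) ^ 4 + ω ^ 2 * h ^ 2) ≤ lam := by
  have hh : 0 < h :=
    hdef ▸ (lt_inf'_iff _).mpr fun i hi => sub_pos.mpr (hmono i (mem_range.mp hi))
  have hcell : ∀ i < n, Set.EqOn (fun t => u t ^ 2) (fun t => (Q i).eval t ^ 2)
      (Set.uIcc (x i) (x (i + 1))) := fun i hi t ht => by
    rw [Set.uIcc_of_le (hmono i hi).le] at ht
    simp only [hQ i hi t ht]
  have hsplit :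
      ∑ i ∈ range n, ∫ t in (x i)..(x (i + 1)), u t ^ 2 = ∫ t in a..b, u t ^ 2 := by
    rw [← hx0, ← hxn]
    exact sum_integral_adjacent_intervals fun i hi =>
      (((Q i).continuous.pow 2).continuousOn.congr (hcell i hi)).intervalIntegrable
  have hpos : 0 < ∫ t in a..b, u t ^ 2 := by
    obtain ⟨t, ht, hut⟩ := hne
    exact integral_pos hab (hu.pow 2) (fun _ _ => sq_nonneg _) ⟨t, ht, by positivity⟩
  have hinverse :
      h ^ 2 * ∑ i ∈ range n, ∫ t in (x i)..(x (i + 1)), (Q i).derivative.eval t ^ 2 ≤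
        12 * p ^ 4 * ∫ t in a..b, u t ^ 2 := by
    rw [← hsplit, mul_sum, mul_sum]
    refine sum_le_sum fun i hi => ?_
    have hin := mem_range.mp hi
    rw [integral_congr (hcell i hin)]
    exact sq_mul_integral_eval_derivative_sq_le (hmono i hin) hh.le (hdef ▸ inf'_le _ hi)
      (hdeg i hin)
  refine div_le_of_le_mul₀ (by positivity) hlam.le (le_of_mul_le_mul_right ?_ hpos)
  linear_combination (2 * h ^ 2) * heq + 2 * mul_le_mul_of_nonneg_left hinverse hlam.le

/-- (Lower bound in the spectral lemma.)  Let `u` be a continuous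
piecewise-polynomial function of degree at most `p ≥ 1` on `[a, b]` (with pieces `Q i` on
the cells `[x i, x (i+1)]` of the partition `a = x 0 < ⋯ < x n = b`), not identically
zero, and let `h` be the minimal cell width.  If `λ > 0` satisfies
`∫ₐᵇ u² = λ (∑ᵢ ∫ (Qᵢ)'² + (ω²/2) ∫ₐᵇ u²)` with `ω ≥ 0`, then
`λ ≥ 2h²/(24 p⁴ + ω² h²)`. -/
theorem spectral_lower_bound (a b : ℝ) (hab : a < b)
    (n : ℕ) (hn : 0 < n) (x : ℕ → ℝ) (hx0 : x 0 = a) (hxn : x n = b)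
    (hmono : ∀ i < n, x i < x (i + 1))
    (h : ℝ)
    (hdef : h = (Finset.range n).inf' (Finset.nonempty_range_iff.mpr hn.ne')
      (fun i => x (i + 1) - x i))
    (p : ℕ) (hp : 1 ≤ p)
    (u : ℝ → ℝ) (hu : ContinuousOn u (Set.Icc a b))
    (Q : ℕ → Polynomial ℝ)
    (hdeg : ∀ i < n, (Q i).natDegree ≤ p)
    (hQ : ∀ i < n, ∀ t ∈ Set.Icc (x i) (x (i + 1)), u t = (Q i).eval t)
    (hne : ∃ t ∈ Set.Icc a b, u t ≠ 0)
    (ω : ℝ) (hω : 0 ≤ ω) (lam : ℝ) (hlam : 0 < lam)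
    (heq : (∫ t in a..b, (u t) ^ 2) =
      lam * ((∑ i ∈ Finset.range n,
          ∫ t in (x i)..(x (i + 1)), ((Q i).derivative.eval t) ^ 2) +
        (ω ^ 2 / 2) * ∫ t in a..b, (u t) ^ 2)) :
    2 * h ^ 2 / (24 * (p : ℝ) ^ 4 + ω ^ 2 * h ^ 2) ≤ lam :=
  spectral_lower_bound_general a b hab n hn x hx0 hxn hmono h hdef p u hu Q hdeg hQ hne ω lam hlam
    heq
end

section
/- For every natural number k and every real x, (−1)ᵏ / (2^{k+1} (k+1)!) · (d/dx)ᵏ [(1 − x²)^{k+1}] = (P_k(x) − P_{k+2}(x)) / (2k + 3), where P_k is the k-th Legendre polynomial. Equivalently, the integrated Legendre (bubble) function W_k defined as the weighted Jacobi polynomial (1−x²)P_k^{(1,1)}(x)/(2(k+1)) coincides with (P_k − P_{k+2})/(2k+3). -/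
/-!
With `u = X² - 1` one has `(u ^ (n + 2))'' = 2(n + 2)(2n + 3) u ^ (n + 1) + 4(n + 2)(n + 1) u ^ n`,
using `X² = u + 1`. Differentiating `k` more times and normalising by Rodrigues' constants gives
`P_{k+2} = P_k + (2k + 3)/(2^{k+1}(k+1)!) · (u ^ (k + 1))⁽ᵏ⁾`, and `(1 - X²)^{k+1} = (-1)^{k+1} u ^ (k + 1)`.
-/

open Polynomial

/-- The `k`-th Legendre polynomial, via Rodrigues' formula
`P_k = 1/(2^k k!) (d/dx)^k (x² − 1)^k`. -/
noncomputable def legendre (k : ℕ) : Polynomial ℝ :=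
  C (1 / (2 ^ k * (k.factorial : ℝ))) * derivative^[k] ((X ^ 2 - 1) ^ k)

theorem derivative_derivative_X_sq_sub_one_pow {R : Type*} [CommRing R] (n : ℕ) :
    derivative (derivative ((X ^ 2 - 1 : R[X]) ^ (n + 2))) =
      C (2 * (n + 2) * (2 * n + 3) : R) * (X ^ 2 - 1) ^ (n + 1) +
        C (4 * (n + 2) * (n + 1) : R) * (X ^ 2 - 1) ^ n := by
  simp only [derivative_pow, derivative_sub, derivative_one, derivative_mul,
    derivative_C, derivative_X, derivative_zero]
  simp only [map_mul, map_add, map_ofNat, map_natCast, C_1]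
  push_cast
  ring

theorem iterate_derivative_X_sq_sub_one_pow_self_add_two {R : Type*} [CommRing R] (k : ℕ) :
    derivative^[k + 2] ((X ^ 2 - 1 : R[X]) ^ (k + 2)) =
      C (2 * (k + 2) * (2 * k + 3) : R) * derivative^[k] ((X ^ 2 - 1) ^ (k + 1)) +
        C (4 * (k + 2) * (k + 1) : R) * derivative^[k] ((X ^ 2 - 1) ^ k) := by
  rw [Function.iterate_add_apply, Function.iterate_succ_apply, Function.iterate_one,
    derivative_derivative_X_sq_sub_one_pow, iterate_map_add,
    iterate_derivative_C_mul, iterate_derivative_C_mul]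

theorem legendre_add_two (k : ℕ) :
    legendre (k + 2) = legendre k +
      C ((2 * k + 3) / (2 ^ (k + 1) * (k + 1).factorial : ℝ)) *
        derivative^[k] ((X ^ 2 - 1) ^ (k + 1)) := by
  have hk : (k.factorial : ℝ) ≠ 0 := by positivity
  simp only [legendre, iterate_derivative_X_sq_sub_one_pow_self_add_two, Nat.factorial_succ]
  simp only [← C_mul, mul_add, ← mul_assoc]
  rw [add_comm]
  congr 3 <;> push_cast <;> field_simp <;> ring

theorem iterate_derivative_one_sub_X_sq_pow {R : Type*} [CommRing R] (k n : ℕ) :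
    derivative^[k] ((1 - X ^ 2 : R[X]) ^ n) =
      C ((-1) ^ n : R) * derivative^[k] ((X ^ 2 - 1) ^ n) := by
  rw [← iterate_derivative_C_mul, C_pow, C_neg, C_1, ← mul_pow, neg_one_mul, neg_sub]

/-- The Rodrigues-type formula for the integrated Legendre (bubble)
function: `(−1)ᵏ/(2^{k+1}(k+1)!) (d/dx)ᵏ (1 − x²)^{k+1} = (P_k(x) − P_{k+2}(x))/(2k+3)`. -/
theorem bubble_rodrigues (k : ℕ) (x : ℝ) :
    ((-1 : ℝ) ^ k / (2 ^ (k + 1) * ((k + 1).factorial : ℝ))) *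
      (derivative^[k] ((1 - X ^ 2) ^ (k + 1)) : Polynomial ℝ).eval x =
    ((legendre k).eval x - (legendre (k + 2)).eval x) / (2 * (k : ℝ) + 3) := by
  have hk : (2 * k + 3 : ℝ) ≠ 0 := by positivity
  rw [iterate_derivative_one_sub_X_sq_pow, legendre_add_two, eval_mul, eval_C, ← eval_sub,
    sub_add_cancel_left, eval_neg, eval_mul, eval_C]
  field_simp
  rw [← pow_add, Odd.neg_one_pow ⟨k, by ring⟩, neg_one_mul]
end

section
/- For all natural numbers k and j, the derivatives of the integrated Legendre functions satisfy ∫_{−1}^{1} W_k'(x) · W_j'(x) dx = (2/(2k+3)) if k = j, and 0 otherwise. In other words, the weak Laplacian discretised in the integrated Legendre basis is the diagonal matrix with entries 2/(2k+3). -/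
/-!
Rodrigues' formula gives `P_{n+2}' = P_n' + (2n+3) P_{n+1}`, so `W_k' = -P_{k+1}` and the claim
is the orthogonality of the Legendre polynomials with `∫ P_n² = 2/(2n+1)`. Writing
`P_n = c_n Dⁿ (x² − 1)ⁿ` and integrating by parts `n` times moves all derivatives onto the other
factor; the boundary terms vanish because `±1` are roots of order `n` of `(x² − 1)ⁿ`. Against a
polynomial of degree `< n` this gives `0`, and against `P_n` it leaves `∫ (x² − 1)ⁿ`, which
`∫ ((x (x² − 1)ⁿ⁺¹)') = 0` computes by recursion.
-/

open Polynomial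

/-- The `k`-th integrated Legendre (bubble) function
`W_k = (P_k − P_{k+2})/(2k+3)`, as a polynomial. -/
noncomputable def bubbleW (k : ℕ) : Polynomial ℝ :=
  C (1 / (2 * (k : ℝ) + 3)) * (legendre k - legendre (k + 2))

noncomputable def polyIntegral (a b : ℝ) : ℝ[X] →ₗ[ℝ] ℝ where
  toFun p := ∫ x in a..b, p.eval x
  map_add' p q := by
    simp only [eval_add]
    exact intervalIntegral.integral_add (p.continuous.intervalIntegrable _ _)
      (q.continuous.intervalIntegrable _ _)
  map_smul' c p := by
    simp only [eval_smul, smul_eq_mul, RingHom.id_apply]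
    exact intervalIntegral.integral_const_mul c _

lemma polyIntegral_apply (a b : ℝ) (p : ℝ[X]) :
    polyIntegral a b p = ∫ x in a..b, p.eval x := rfl

lemma polyIntegral_C_mul (a b c : ℝ) (p : ℝ[X]) :
    polyIntegral a b (C c * p) = c * polyIntegral a b p := by
  rw [← smul_eq_C_mul, map_smul, smul_eq_mul]

lemma polyIntegral_derivative (a b : ℝ) (p : ℝ[X]) :
    polyIntegral a b (derivative p) = p.eval b - p.eval a :=
  intervalIntegral.integral_eq_sub_of_hasDerivAt (fun x _ => p.hasDerivAt x)
    (p.derivative.continuous.intervalIntegrable _ _)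

lemma polyIntegral_derivative_mul {a b : ℝ} {f : ℝ[X]} (ha : f.eval a = 0) (hb : f.eval b = 0)
    (q : ℝ[X]) :
    polyIntegral a b (derivative f * q) = -polyIntegral a b (f * derivative q) := by
  have h := polyIntegral_derivative a b (f * q)
  rw [derivative_mul, map_add, eval_mul, eval_mul, ha, hb] at h
  linarith

lemma polyIntegral_iterate_derivative_mul {a b : ℝ} {m : ℕ} {f : ℝ[X]}
    (hf : ∀ i < m, (derivative^[i] f).eval a = 0 ∧ (derivative^[i] f).eval b = 0) (q : ℝ[X]) :
    polyIntegral a b (derivative^[m] f * q) =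
      (-1) ^ m * polyIntegral a b (f * derivative^[m] q) := by
  induction m generalizing f with
  | zero => simp
  | succ m ih =>
    have hdf : ∀ i < m, (derivative^[i] (derivative f)).eval a = 0 ∧
        (derivative^[i] (derivative f)).eval b = 0 := fun i hi => hf (i + 1) (by omega)
    obtain ⟨ha, hb⟩ : f.eval a = 0 ∧ f.eval b = 0 := hf 0 m.succ_pos
    rw [Function.iterate_succ_apply, ih hdf, polyIntegral_derivative_mul ha hb,
      ← Function.iterate_succ_apply' derivative, pow_succ]
    ring

lemma iterate_derivative_natDegree {R : Type*} [CommSemiring R] (p : R[X]) :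
    derivative^[p.natDegree] p = C (p.natDegree.factorial * p.leadingCoeff) := by
  rw [eq_C_of_natDegree_le_zero ((natDegree_iterate_derivative p _).trans (by omega)),
    coeff_iterate_derivative, zero_add, Nat.descFactorial_self, nsmul_eq_mul, leadingCoeff]

section X_sq_sub_one

variable {R : Type*} [CommRing R]

lemma monic_X_sq_sub_one : (X ^ 2 - 1 : R[X]).Monic := by
  simpa using monic_X_pow_sub_C (1 : R) two_ne_zero

lemma natDegree_X_sq_sub_one_pow [Nontrivial R] (n : ℕ) :
    ((X ^ 2 - 1 : R[X]) ^ n).natDegree = 2 * n := by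
  rw [monic_X_sq_sub_one.natDegree_pow, ← C_1, natDegree_X_pow_sub_C, mul_comm]

lemma derivative_X_sq_sub_one_pow_succ (n : ℕ) :
    derivative ((X ^ 2 - 1 : R[X]) ^ (n + 1)) =
      C (2 * ((n : R) + 1)) * (X * (X ^ 2 - 1) ^ n) := by
  simp only [derivative_pow, derivative_sub, derivative_X, derivative_one, map_mul, map_add,
    map_ofNat, map_natCast, map_one, Nat.cast_ofNat, Nat.cast_add, Nat.cast_one,
    add_tsub_cancel_right]
  ring

-- `X² = (X² − 1) + 1` turns `X² (X² − 1)ⁿ` into `(X² − 1)ⁿ⁺¹ + (X² − 1)ⁿ`.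
lemma derivative_X_mul_X_sq_sub_one_pow_succ (n : ℕ) :
    derivative (X * (X ^ 2 - 1 : R[X]) ^ (n + 1)) =
      C (2 * (n : R) + 3) * (X ^ 2 - 1) ^ (n + 1) + C (2 * (n : R) + 2) * (X ^ 2 - 1) ^ n := by
  rw [derivative_mul, derivative_X, derivative_X_sq_sub_one_pow_succ]
  simp only [map_add, map_mul, map_ofNat, map_one]
  ring

lemma eval_iterate_derivative_X_sq_sub_one_pow {i n : ℕ} (h : i < n) {x : R} (hx : x ^ 2 = 1) :
    (derivative^[i] ((X ^ 2 - 1 : R[X]) ^ n)).eval x = 0 := by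
  obtain ⟨r, hr⟩ := pow_sub_dvd_iterate_derivative_pow (X ^ 2 - 1 : R[X]) n i
  rw [hr, eval_mul, eval_pow, eval_sub, eval_pow, eval_X, eval_one, hx, sub_self,
    zero_pow (by omega), zero_mul]

end X_sq_sub_one

lemma polyIntegral_X_sq_sub_one_pow (n : ℕ) :
    polyIntegral (-1) 1 ((X ^ 2 - 1) ^ n) =
      (-1) ^ n * 2 ^ (2 * n + 1) * (n.factorial : ℝ) ^ 2 / (2 * n + 1).factorial := by
  induction n with
  | zero => norm_num [polyIntegral_apply]
  | succ n ih =>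
    have hrec : (2 * (n : ℝ) + 3) * polyIntegral (-1) 1 ((X ^ 2 - 1) ^ (n + 1)) +
        (2 * n + 2) * polyIntegral (-1) 1 ((X ^ 2 - 1) ^ n) = 0 := by
      have h := polyIntegral_derivative (-1) 1 (X * (X ^ 2 - 1) ^ (n + 1))
      rw [derivative_X_mul_X_sq_sub_one_pow_succ, map_add, polyIntegral_C_mul,
        polyIntegral_C_mul] at h
      simpa using h
    rw [ih] at hrec
    rw [Nat.factorial_succ, show 2 * (n + 1) + 1 = (2 * n + 1) + 1 + 1 by ring,
      Nat.factorial_succ, Nat.factorial_succ]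
    have : (2 * (n : ℝ) + 3) ≠ 0 := by positivity
    have : ((2 * n + 1).factorial : ℝ) ≠ 0 := by positivity
    push_cast
    field_simp at hrec ⊢
    linear_combination (2 * (n : ℝ) + 2) * hrec

lemma rodrigues_const_succ (n : ℕ) :
    1 / (2 ^ (n + 1) * ((n + 1).factorial : ℝ)) * (2 * ((n : ℝ) + 1)) =
      1 / (2 ^ n * n.factorial) := by
  rw [Nat.factorial_succ, pow_succ]
  push_cast
  field_simp

lemma natDegree_legendre_le (n : ℕ) : (legendre n).natDegree ≤ n := by
  refine (natDegree_C_mul_le _ _).trans ((natDegree_iterate_derivative _ _).trans ?_)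
  rw [natDegree_X_sq_sub_one_pow]
  omega

lemma iterate_derivative_legendre_self (n : ℕ) :
    derivative^[n] (legendre n) = C (1 / (2 ^ n * (n.factorial : ℝ)) * (2 * n).factorial) := by
  have h := iterate_derivative_natDegree ((X ^ 2 - 1 : ℝ[X]) ^ n)
  rw [natDegree_X_sq_sub_one_pow, (monic_X_sq_sub_one.pow n).leadingCoeff, mul_one] at h
  rw [legendre, iterate_derivative_C_mul, ← Function.iterate_add_apply, ← two_mul, h, C_mul]

lemma polyIntegral_legendre_mul (n : ℕ) (q : ℝ[X]) :
    polyIntegral (-1) 1 (legendre n * q) =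
      (-1) ^ n / (2 ^ n * n.factorial) *
        polyIntegral (-1) 1 ((X ^ 2 - 1) ^ n * derivative^[n] q) := by
  have hboundary : ∀ i < n, (derivative^[i] ((X ^ 2 - 1 : ℝ[X]) ^ n)).eval (-1) = 0 ∧
      (derivative^[i] ((X ^ 2 - 1 : ℝ[X]) ^ n)).eval 1 = 0 := fun i hi =>
    ⟨eval_iterate_derivative_X_sq_sub_one_pow hi (by norm_num),
      eval_iterate_derivative_X_sq_sub_one_pow hi (by norm_num)⟩
  rw [legendre, mul_assoc, polyIntegral_C_mul, polyIntegral_iterate_derivative_mul hboundary]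
  ring

lemma polyIntegral_legendre_mul_of_natDegree_lt {n : ℕ} {q : ℝ[X]} (hq : q.natDegree < n) :
    polyIntegral (-1) 1 (legendre n * q) = 0 := by
  rw [polyIntegral_legendre_mul, iterate_derivative_eq_zero hq, mul_zero, map_zero, mul_zero]

lemma polyIntegral_legendre_mul_self (n : ℕ) :
    polyIntegral (-1) 1 (legendre n * legendre n) = 2 / (2 * (n : ℝ) + 1) := by
  rw [polyIntegral_legendre_mul, iterate_derivative_legendre_self, mul_comm _ (C _),
    polyIntegral_C_mul, polyIntegral_X_sq_sub_one_pow, Nat.factorial_succ,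
    show 2 * n + 1 = n + n + 1 by ring, pow_succ, pow_add, ← two_mul]
  have : ((2 * n).factorial : ℝ) ≠ 0 := by positivity
  have hsign : ((-1 : ℝ) ^ n) ^ 2 = 1 := by rw [← pow_mul, mul_comm, pow_mul]; norm_num
  push_cast
  field_simp
  exact hsign

lemma polyIntegral_legendre_mul_legendre (m n : ℕ) :
    polyIntegral (-1) 1 (legendre m * legendre n) =
      if m = n then 2 / (2 * (m : ℝ) + 1) else 0 := by
  rcases lt_trichotomy m n with h | rfl | h
  · rw [if_neg h.ne, mul_comm]
    exact polyIntegral_legendre_mul_of_natDegree_lt ((natDegree_legendre_le m).trans_lt h)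
  · rw [if_pos rfl, polyIntegral_legendre_mul_self]
  · rw [if_neg h.ne']
    exact polyIntegral_legendre_mul_of_natDegree_lt ((natDegree_legendre_le n).trans_lt h)

lemma derivative_legendre_add_two (n : ℕ) :
    derivative (legendre (n + 2)) =
      derivative (legendre n) + C (2 * (n : ℝ) + 3) * legendre (n + 1) := by
  have hD : derivative^[n + 3] ((X ^ 2 - 1 : ℝ[X]) ^ (n + 2)) =
      C (2 * ((n : ℝ) + 2)) *
        (C (2 * (n : ℝ) + 3) * derivative^[n + 1] ((X ^ 2 - 1) ^ (n + 1)) +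
          C (2 * (n : ℝ) + 2) * derivative^[n + 1] ((X ^ 2 - 1) ^ n)) := by
    rw [Function.iterate_succ_apply, derivative_X_sq_sub_one_pow_succ, iterate_derivative_C_mul,
      Function.iterate_succ_apply, derivative_X_mul_X_sq_sub_one_pow_succ, iterate_map_add,
      iterate_derivative_C_mul, iterate_derivative_C_mul]
    push_cast
    ring_nf
  simp only [legendre, derivative_C_mul, ← Function.iterate_succ_apply' derivative, hD]
  rw [← rodrigues_const_succ n, ← rodrigues_const_succ (n + 1)]
  simp only [map_mul, map_add, map_ofNat, map_natCast, map_one, Nat.cast_add, Nat.cast_one]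
  ring

lemma derivative_bubbleW (k : ℕ) : derivative (bubbleW k) = -legendre (k + 1) := by
  have : (2 * (k : ℝ) + 3) ≠ 0 := by positivity
  rw [bubbleW, derivative_C_mul, derivative_sub, derivative_legendre_add_two, sub_add_cancel_left,
    mul_neg, ← mul_assoc, ← C_mul, one_div_mul_cancel this, C_1, one_mul]

/-- The weak Laplacian in the integrated Legendre basis is diagonal:
`∫_{−1}^{1} W_k'(x) W_j'(x) dx = 2/(2k+3) δ_{kj}`. -/
theorem bubble_weak_laplacian_diagonal (k j : ℕ) :
    (∫ x in (-1 : ℝ)..1,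
        (derivative (bubbleW k)).eval x * (derivative (bubbleW j)).eval x) =
      if k = j then 2 / (2 * (k : ℝ) + 3) else 0 := by
  simp only [← eval_mul, ← polyIntegral_apply, derivative_bubbleW, neg_mul_neg,
    polyIntegral_legendre_mul_legendre, add_left_inj]
  congr 2
  push_cast
  ring
end
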